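/- arXiv:2107.12694 — 9 statements merged into one kernel-verified Lean document; each statement's English description precedes it below -/
import Mathlib

section
/- For every real λ > 0 and every real k > 1, there exists a constant C > 0, depending only on k and λ, such that for all x, y > 0: 2·x·y·|ln y|^λ ≤ x²·( k·4^{(λ−1)⁺}·|ln x|^{2λ} + C ) + y². -/
/-!
Write `y = x v²`, so that `log y = log x + log v²`, and split `|log y|^λ ≤ 2^{(λ-1)⁺}(|log x|^λ +
|log v²|^λ)`. Multiplied by `2xy`, the first term is absorbed by AM–GM, `2AB ≤ kA² + B²/k`, into
`k 4^{(λ-1)⁺} x² |log x|^{2λ} + y²/k`. For the second, `|log v²|^λ ≤ (2λ)^λ (v + v⁻¹)` makes it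
`x²` times a cubic in `v`, which a quartic `(1 - 1/k) v⁴ + C` dominates; the two multiples of `y²`
add up to `y²`.
-/

open Real

theorem Real.add_rpow_le_two_rpow_mul_add_rpow {p a b : ℝ} (ha : 0 ≤ a) (hb : 0 ≤ b)
    (hp : 0 ≤ p) : (a + b) ^ p ≤ 2 ^ max (p - 1) 0 * (a ^ p + b ^ p) := by
  rcases le_total p 1 with hp1 | hp1
  · rw [max_eq_right (by linarith), rpow_zero, one_mul]
    exact rpow_add_le_add_rpow ha hb hp hp1
  · rw [max_eq_left (by linarith)]
    lift a to NNReal using ha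
    lift b to NNReal using hb
    exact_mod_cast NNReal.rpow_add_le_mul_rpow_add_rpow a b hp1

theorem Real.log_rpow_le_of_one_le {p v : ℝ} (hp : 0 < p) (hv : 1 ≤ v) :
    log v ^ p ≤ p ^ p * v := by
  have hlog : log v ≤ p * v ^ p⁻¹ := by
    simpa [div_eq_mul_inv, mul_comm] using log_le_rpow_div (by linarith) (inv_pos.mpr hp)
  calc log v ^ p ≤ (p * v ^ p⁻¹) ^ p := rpow_le_rpow (log_nonneg hv) hlog hp.le
    _ = p ^ p * v := by
      rw [mul_rpow hp.le (by positivity), ← rpow_mul (by linarith), inv_mul_cancel₀ hp.ne',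
        rpow_one]

theorem Real.abs_log_rpow_le {p v : ℝ} (hp : 0 < p) (hv : 0 < v) :
    |log v| ^ p ≤ p ^ p * (v + v⁻¹) := by
  have hpp : 0 ≤ p ^ p := by positivity
  rcases le_total 1 v with hv1 | hv1
  · rw [abs_of_nonneg (log_nonneg hv1)]
    nlinarith [log_rpow_le_of_one_le hp hv1, inv_pos.mpr hv]
  · rw [abs_of_nonpos (log_nonpos hv.le hv1), ← log_inv]
    nlinarith [log_rpow_le_of_one_le hp (one_le_inv₀ hv |>.mpr hv1)]

theorem Real.abs_log_sq_rpow_le {p v : ℝ} (hp : 0 < p) (hv : 0 < v) :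
    |log (v ^ 2)| ^ p ≤ (2 * p) ^ p * (v + v⁻¹) := by
  rw [log_pow, abs_mul, Nat.cast_ofNat, abs_two, mul_rpow zero_le_two (abs_nonneg _),
    mul_rpow zero_le_two hp.le, mul_assoc]
  exact mul_le_mul_of_nonneg_left (abs_log_rpow_le hp hv) (by positivity)

theorem Real.abs_log_mul_sq_rpow_le {p x v : ℝ} (hp : 0 < p) (hx : 0 < x) (hv : 0 < v) :
    |log (x * v ^ 2)| ^ p ≤
      2 ^ max (p - 1) 0 * (|log x| ^ p + (2 * p) ^ p * (v + v⁻¹)) :=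
  calc |log (x * v ^ 2)| ^ p ≤ (|log x| + |log (v ^ 2)|) ^ p := by
        rw [log_mul hx.ne' (by positivity)]; gcongr; exact abs_add_le _ _
    _ ≤ 2 ^ max (p - 1) 0 * (|log x| ^ p + |log (v ^ 2)| ^ p) :=
        add_rpow_le_two_rpow_mul_add_rpow (abs_nonneg _) (abs_nonneg _) hp.le
    _ ≤ 2 ^ max (p - 1) 0 * (|log x| ^ p + (2 * p) ^ p * (v + v⁻¹)) := by
        gcongr; exact abs_log_sq_rpow_le hp hv

theorem exists_mul_cube_add_le {B ε : ℝ} (hB : 0 ≤ B) (hε : 0 < ε) :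
    ∃ C > 0, ∀ v ≥ 0, B * (v ^ 3 + v) ≤ ε * v ^ 4 + C := by
  refine ⟨1 + B + (2 * B) ^ 4 / ε ^ 3, by positivity, fun v hv => ?_⟩
  have hlin : v ≤ 1 + v ^ 3 := by
    rcases le_total v 1 with h | h
    · nlinarith [pow_nonneg hv 3]
    · nlinarith [mul_le_mul h h zero_le_one hv, mul_le_mul_of_nonneg_left h hv]
  have hcube : 2 * B * v ^ 3 ≤ ε * v ^ 4 + (2 * B) ^ 4 / ε ^ 3 := by
    rcases le_total (ε * v) (2 * B) with h | h
    · have : v ≤ 2 * B / ε := by rw [le_div_iff₀ hε]; linarith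
      have : v ^ 3 ≤ (2 * B / ε) ^ 3 := by gcongr
      have : 2 * B * (2 * B / ε) ^ 3 = (2 * B) ^ 4 / ε ^ 3 := by field_simp
      nlinarith [pow_nonneg hv 4]
    · nlinarith [pow_nonneg hv 3, (by positivity : 0 ≤ (2 * B) ^ 4 / ε ^ 3)]
  nlinarith [mul_le_mul_of_nonneg_left hlin hB]

/-- Proposition 2.2, first assertion: for every `λ > 0` and `k > 1` there is a constant
`C > 0` (depending only on `k, λ`) such that for all `x, y > 0`,
`2·x·y·|ln y|^λ ≤ x²·(k·4^{(λ-1)⁺}·|ln x|^{2λ} + C) + y²`. -/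
theorem stmt_0 (lam k : ℝ) (hlam : 0 < lam) (hk : 1 < k) :
    ∃ C : ℝ, 0 < C ∧ ∀ x y : ℝ, 0 < x → 0 < y →
      2 * x * y * |Real.log y| ^ lam ≤
        x ^ 2 * (k * (4 : ℝ) ^ (max (lam - 1) 0) * |Real.log x| ^ (2 * lam) + C) + y ^ 2 := by
  set p := max (lam - 1) 0
  obtain ⟨C, hC, hCle⟩ := exists_mul_cube_add_le (B := 2 * 2 ^ p * (2 * lam) ^ lam)
    (ε := 1 - k⁻¹) (by positivity) (sub_pos.2 (inv_lt_one_of_one_lt₀ hk))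
  refine ⟨C, hC, fun x y hx hy => ?_⟩
  obtain ⟨v, hv, rfl⟩ : ∃ v > 0, y = x * v ^ 2 :=
    ⟨√(y / x), by positivity, by rw [sq_sqrt (by positivity)]; field_simp⟩
  have hsq : (2 ^ p * x * |log x| ^ lam) ^ 2 = 4 ^ p * x ^ 2 * |log x| ^ (2 * lam) := by
    rw [mul_pow, mul_pow, sq (2 ^ p), ← mul_rpow zero_le_two zero_le_two,
      ← rpow_mul_natCast (abs_nonneg _), mul_comm lam]
    norm_num
  calc 2 * x * (x * v ^ 2) * |log (x * v ^ 2)| ^ lam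
      ≤ 2 * x * (x * v ^ 2) * (2 ^ p * (|log x| ^ lam + (2 * lam) ^ lam * (v + v⁻¹))) := by
        gcongr; exact abs_log_mul_sq_rpow_le hlam hx hv
    _ = 2 * (2 ^ p * x * |log x| ^ lam) * (x * v ^ 2)
          + x ^ 2 * (2 * 2 ^ p * (2 * lam) ^ lam * (v ^ 3 + v)) := by field_simp
    _ ≤ (k * (2 ^ p * x * |log x| ^ lam) ^ 2 + k⁻¹ * (x * v ^ 2) ^ 2)
          + x ^ 2 * ((1 - k⁻¹) * v ^ 4 + C) := by
        gcongr
        · exact two_mul_le_add_mul_sq (by linarith)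
        · exact hCle v hv.le
    _ = _ := by rw [hsq]; ring
end

section
/- Define ψ(x, μ) := x·exp(μ·√(2·ln(1+x))) for x, μ ∈ [0, ∞). Then: (a) for each fixed x ≥ 0, the map μ ↦ ψ(x, μ) is nondecreasing on [0, ∞), and strictly increasing when x > 0; (b) for each fixed μ > 0, the map x ↦ ψ(x, μ) is positive on (0, ∞), strictly increasing on [0, ∞), and strictly convex on [0, ∞). -/
/-!
Write `ψ(x, μ) = x · exp (μ g(x))` with `g(x) = √(2 ln(1 + x))`. Monotonicity in `μ` and in `x`
is immediate because `x`, `exp` and `g` are monotone and nonnegative. For convexity,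
`ψ'' = μ e^{μ g} (2 g' + x g'' + μ x g'²)`, and for this `g` one has
`2 g' + x g'' = ((2 + x) g² - x) / ((1 + x)² g³)`, which is positive since
`g² = 2 ln(1 + x) ≥ 4x / (2 + x)`.
-/

/-- `ψ(x, μ) = x·exp(μ·√(2·ln(1+x)))`. -/
noncomputable def psi (x μ : ℝ) : ℝ := x * Real.exp (μ * Real.sqrt (2 * Real.log (1 + x)))

open Real Set

section MulExp

variable {g g' g'' : ℝ → ℝ} {μ : ℝ}

lemma hasDerivAt_mul_exp_mul {x : ℝ} (hg : HasDerivAt g (g' x) x) :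
    HasDerivAt (fun y => y * exp (μ * g y)) (exp (μ * g x) * (1 + μ * x * g' x)) x :=
  ((hasDerivAt_id' x).mul (hg.const_mul μ).exp).congr_deriv (by ring)

lemma hasDerivAt_exp_mul_mul_one_add {x : ℝ} (hg : HasDerivAt g (g' x) x)
    (hg' : HasDerivAt g' (g'' x) x) :
    HasDerivAt (fun y => exp (μ * g y) * (1 + μ * y * g' y))
      (μ * exp (μ * g x) * (2 * g' x + x * g'' x + μ * x * g' x ^ 2)) x :=
  ((hg.const_mul μ).exp.mul ((((hasDerivAt_id' x).const_mul μ).mul hg').const_add 1)).congr_deriv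
    (by simp only [Pi.mul_apply]; ring)

lemma strictConvexOn_mul_exp_mul (hμ : 0 < μ) (hcont : ContinuousOn g (Ici 0))
    (hg : ∀ x, 0 < x → HasDerivAt g (g' x) x) (hg' : ∀ x, 0 < x → HasDerivAt g' (g'' x) x)
    (hpos : ∀ x, 0 < x → 0 < 2 * g' x + x * g'' x) :
    StrictConvexOn ℝ (Ici 0) (fun x => x * exp (μ * g x)) := by
  refine strictConvexOn_of_deriv2_pos (convex_Ici 0) (by fun_prop) fun x hx => ?_
  rw [interior_Ici, mem_Ioi] at hx
  have hderiv : deriv (fun y => y * exp (μ * g y)) =ᶠ[nhds x]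
      fun y => exp (μ * g y) * (1 + μ * y * g' y) :=
    Filter.eventuallyEq_of_mem (isOpen_Ioi.mem_nhds hx) fun y hy =>
      (hasDerivAt_mul_exp_mul (hg y hy)).deriv
  rw [Function.iterate_succ_apply, Function.iterate_one, hderiv.deriv_eq,
    (hasDerivAt_exp_mul_mul_one_add (hg x hx) (hg' x hx)).deriv]
  have hsq : 0 ≤ μ * x * g' x ^ 2 := by positivity
  have := add_pos_of_pos_of_nonneg (hpos x hx) hsq
  positivity

lemma strictMonoOn_mul_exp_mul (hμ : 0 ≤ μ) (hg : MonotoneOn g (Ici 0)) :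
    StrictMonoOn (fun x => x * exp (μ * g x)) (Ici 0) := fun a ha b hb hab =>
  calc a * exp (μ * g a) ≤ a * exp (μ * g b) :=
        mul_le_mul_of_nonneg_left (by gcongr; exact hg ha hb hab.le) ha
    _ < b * exp (μ * g b) := by gcongr

end MulExp

lemma monotone_mul_exp_mul_const {a c : ℝ} (ha : 0 ≤ a) (hc : 0 ≤ c) :
    Monotone fun μ => a * exp (μ * c) := fun _ _ h => by dsimp only; gcongr

lemma strictMono_mul_exp_mul_const {a c : ℝ} (ha : 0 < a) (hc : 0 < c) :
    StrictMono fun μ => a * exp (μ * c) := fun _ _ h => by dsimp only; gcongr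

noncomputable def sqrtTwoLogOneAdd (x : ℝ) : ℝ := √(2 * log (1 + x))

lemma psi_eq (x μ : ℝ) : psi x μ = x * exp (μ * sqrtTwoLogOneAdd x) := rfl

lemma sqrtTwoLogOneAdd_pos {x : ℝ} (hx : 0 < x) : 0 < sqrtTwoLogOneAdd x :=
  sqrt_pos.2 (mul_pos two_pos (log_pos (by linarith)))

lemma sq_sqrtTwoLogOneAdd {x : ℝ} (hx : 0 ≤ x) : sqrtTwoLogOneAdd x ^ 2 = 2 * log (1 + x) :=
  sq_sqrt (mul_nonneg zero_le_two (log_nonneg (by linarith)))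

lemma monotoneOn_sqrtTwoLogOneAdd : MonotoneOn sqrtTwoLogOneAdd (Ioi (-1)) := fun a ha b _ hab =>
  sqrt_le_sqrt (by gcongr; linarith [mem_Ioi.1 ha])

lemma continuousOn_sqrtTwoLogOneAdd : ContinuousOn sqrtTwoLogOneAdd (Ioi (-1)) := by
  refine (continuousOn_const.mul (ContinuousOn.log (by fun_prop) fun x hx => ?_)).sqrt
  have : 0 < 1 + x := by linarith [mem_Ioi.1 hx]
  exact this.ne'

lemma hasDerivAt_sqrtTwoLogOneAdd {x : ℝ} (hx : 0 < x) :
    HasDerivAt sqrtTwoLogOneAdd ((1 + x) * sqrtTwoLogOneAdd x)⁻¹ x := by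
  have hlog := (((hasDerivAt_id' x).const_add 1).log (by positivity)).const_mul 2
  refine (hlog.sqrt (mul_pos two_pos (log_pos (by linarith))).ne').congr_deriv ?_
  have := sqrtTwoLogOneAdd_pos hx
  rw [sqrtTwoLogOneAdd] at this ⊢
  field_simp

lemma hasDerivAt_inv_one_add_mul_sqrtTwoLogOneAdd {x : ℝ} (hx : 0 < x) :
    HasDerivAt (fun y => ((1 + y) * sqrtTwoLogOneAdd y)⁻¹)
      (-(sqrtTwoLogOneAdd x ^ 2 + 1) / ((1 + x) ^ 2 * sqrtTwoLogOneAdd x ^ 3)) x := by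
  have hg := sqrtTwoLogOneAdd_pos hx
  refine ((((hasDerivAt_id' x).const_add 1).mul (hasDerivAt_sqrtTwoLogOneAdd hx)).inv
    (mul_pos (by linarith) hg).ne').congr_deriv ?_
  simp only [Pi.mul_apply]
  field_simp

lemma lt_two_add_mul_sq_sqrtTwoLogOneAdd {x : ℝ} (hx : 0 < x) :
    x < (2 + x) * sqrtTwoLogOneAdd x ^ 2 := by
  have h := le_log_one_add_of_nonneg hx.le
  rw [div_le_iff₀ (by linarith)] at h
  rw [sq_sqrtTwoLogOneAdd hx.le]
  linarith

lemma two_mul_deriv_add_mul_deriv2_sqrtTwoLogOneAdd_pos {x : ℝ} (hx : 0 < x) :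
    0 < 2 * ((1 + x) * sqrtTwoLogOneAdd x)⁻¹ +
      x * (-(sqrtTwoLogOneAdd x ^ 2 + 1) / ((1 + x) ^ 2 * sqrtTwoLogOneAdd x ^ 3)) := by
  have hg := sqrtTwoLogOneAdd_pos hx
  have key := lt_two_add_mul_sq_sqrtTwoLogOneAdd hx
  have : 2 * ((1 + x) * sqrtTwoLogOneAdd x)⁻¹ +
      x * (-(sqrtTwoLogOneAdd x ^ 2 + 1) / ((1 + x) ^ 2 * sqrtTwoLogOneAdd x ^ 3)) =
      ((2 + x) * sqrtTwoLogOneAdd x ^ 2 - x) / ((1 + x) ^ 2 * sqrtTwoLogOneAdd x ^ 3) := by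
    field_simp
    ring
  rw [this]
  exact div_pos (by linarith) (by positivity)

/-- Lemma 2.6, parts (i) and (ii): (a) for each `x ≥ 0` the map `μ ↦ ψ(x, μ)` is
nondecreasing on `[0, ∞)`, and strictly increasing when `x > 0`; (b) for each `μ > 0` the
map `x ↦ ψ(x, μ)` is positive on `(0, ∞)`, strictly increasing on `[0, ∞)`, and strictly
convex on `[0, ∞)`. -/
theorem stmt_4 :
    (∀ x : ℝ, 0 ≤ x → MonotoneOn (fun μ => psi x μ) (Set.Ici 0)) ∧
    (∀ x : ℝ, 0 < x → StrictMonoOn (fun μ => psi x μ) (Set.Ici 0)) ∧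
    (∀ μ : ℝ, 0 < μ →
      (∀ x : ℝ, 0 < x → 0 < psi x μ) ∧
      StrictMonoOn (fun x => psi x μ) (Set.Ici 0) ∧
      StrictConvexOn ℝ (Set.Ici 0) (fun x => psi x μ)) := by
  simp only [psi_eq]
  refine ⟨fun x hx => ?_, fun x hx => ?_, fun μ hμ => ⟨fun x hx => by positivity, ?_, ?_⟩⟩
  · exact (monotone_mul_exp_mul_const hx (sqrt_nonneg _)).monotoneOn _
  · exact (strictMono_mul_exp_mul_const hx (sqrtTwoLogOneAdd_pos hx)).strictMonoOn _
  · exact strictMonoOn_mul_exp_mul hμ.le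
      (monotoneOn_sqrtTwoLogOneAdd.mono (Ici_subset_Ioi.2 (by norm_num)))
  · exact strictConvexOn_mul_exp_mul hμ
      (continuousOn_sqrtTwoLogOneAdd.mono (Ici_subset_Ioi.2 (by norm_num)))
      (fun x hx => hasDerivAt_sqrtTwoLogOneAdd hx)
      (fun x hx => hasDerivAt_inv_one_add_mul_sqrtTwoLogOneAdd hx)
      (fun x hx => two_mul_deriv_add_mul_deriv2_sqrtTwoLogOneAdd_pos hx)
end

section
/- Define ψ(x, μ) := x·exp(μ·√(2·ln(1+x))) for x, μ ∈ [0, ∞). Then for all c > 1 and all x, μ ∈ [0, ∞): ψ(c·x, μ) ≤ ψ(c, μ)·ψ(x, μ). -/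
/-- Lemma 2.6, part (iii): for all `c > 1` and all `x, μ ≥ 0`,
`ψ(c·x, μ) ≤ ψ(c, μ)·ψ(x, μ)`. -/
theorem stmt_5 (c x μ : ℝ) (hc : 1 < c) (hx : 0 ≤ x) (hμ : 0 ≤ μ) :
    psi (c * x) μ ≤ psi c μ * psi x μ := by
  have hc0 : (0:ℝ) < c := lt_trans one_pos hc
  have hlc : 0 ≤ Real.log (1 + c) := Real.log_nonneg (by linarith)
  have hlx : 0 ≤ Real.log (1 + x) := Real.log_nonneg (by linarith)
  have h1 : Real.log (1 + c * x) ≤ Real.log (1 + c) + Real.log (1 + x) := by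
    rw [← Real.log_mul (by linarith) (by linarith)]
    apply Real.log_le_log (by nlinarith)
    nlinarith
  have h2 : Real.sqrt (2 * Real.log (1 + c * x)) ≤
      Real.sqrt (2 * Real.log (1 + c)) + Real.sqrt (2 * Real.log (1 + x)) := by
    calc Real.sqrt (2 * Real.log (1 + c * x))
        ≤ Real.sqrt (2 * Real.log (1 + c) + 2 * Real.log (1 + x)) := by
          apply Real.sqrt_le_sqrt; linarith
      _ ≤ Real.sqrt ((Real.sqrt (2 * Real.log (1 + c)) + Real.sqrt (2 * Real.log (1 + x)))^2) := by
          apply Real.sqrt_le_sqrt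
          nlinarith [Real.sq_sqrt (by linarith : 0 ≤ 2 * Real.log (1 + c)),
            Real.sq_sqrt (by linarith : 0 ≤ 2 * Real.log (1 + x)),
            Real.sqrt_nonneg (2 * Real.log (1 + c)), Real.sqrt_nonneg (2 * Real.log (1 + x))]
      _ = _ := Real.sqrt_sq (by positivity)
  have h3 : Real.exp (μ * Real.sqrt (2 * Real.log (1 + c * x))) ≤
      Real.exp (μ * Real.sqrt (2 * Real.log (1 + c))) *
      Real.exp (μ * Real.sqrt (2 * Real.log (1 + x))) := by
    rw [← Real.exp_add]
    apply Real.exp_le_exp.2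
    nlinarith
  unfold psi
  have hcx : 0 ≤ c * x := mul_nonneg hc0.le hx
  calc c * x * Real.exp (μ * Real.sqrt (2 * Real.log (1 + c * x)))
      ≤ c * x * (Real.exp (μ * Real.sqrt (2 * Real.log (1 + c))) *
        Real.exp (μ * Real.sqrt (2 * Real.log (1 + x)))) :=
        mul_le_mul_of_nonneg_left h3 hcx
    _ = _ := by ring
end

section
/- Define ψ(x, μ) := x·exp(μ·√(2·ln(1+x))) for x, μ ∈ [0, ∞). Then for every real x, every y ≥ 0, and every μ > 0: e^x · y ≤ e^{x²/(2μ²)} + e^{2μ²}·ψ(y, μ). -/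
/-- Lemma 2.6, part (v): for every real `x`, every `y ≥ 0` and every `μ > 0`,
`e^x · y ≤ e^{x²/(2μ²)} + e^{2μ²}·ψ(y, μ)`. -/
theorem stmt_7 (x y μ : ℝ) (hy : 0 ≤ y) (hμ : 0 < μ) :
    Real.exp x * y ≤ Real.exp (x ^ 2 / (2 * μ ^ 2)) + Real.exp (2 * μ ^ 2) * psi y μ := by
  set s := Real.sqrt (2 * Real.log (1 + y)) with hs
  have hlog : 0 ≤ Real.log (1 + y) := Real.log_nonneg (by linarith)
  have hs0 : 0 ≤ s := Real.sqrt_nonneg _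
  have hssq : s ^ 2 = 2 * Real.log (1 + y) := Real.sq_sqrt (by linarith)
  have hexplog : Real.exp (Real.log (1 + y)) = 1 + y := Real.exp_log (by linarith)
  have hy1 : y ≤ Real.exp (s ^ 2 / 2) := by
    rw [hssq]
    have : (2 * Real.log (1 + y)) / 2 = Real.log (1 + y) := by ring
    rw [this, hexplog]; linarith
  have hpsi : psi y μ = y * Real.exp (μ * s) := rfl
  have hpsi0 : 0 ≤ psi y μ := mul_nonneg hy (Real.exp_pos _).le
  rcases le_or_gt x (μ * s + 2 * μ ^ 2) with h | h
  · have h1 : Real.exp x ≤ Real.exp (μ * s) * Real.exp (2 * μ ^ 2) := by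
      rw [← Real.exp_add]; exact Real.exp_le_exp.mpr h
    have h2 : Real.exp x * y ≤ Real.exp (2 * μ ^ 2) * psi y μ := by
      rw [hpsi]
      nlinarith [mul_le_mul_of_nonneg_right h1 hy]
    have h3 : (0:ℝ) < Real.exp (x ^ 2 / (2 * μ ^ 2)) := Real.exp_pos _
    linarith
  · have hx2 : 2 * μ ^ 2 < x := by nlinarith [mul_nonneg hμ.le hs0]
    have hsq : (μ * s) ^ 2 ≤ (x - 2 * μ ^ 2) ^ 2 := by
      have := mul_nonneg hμ.le hs0
      nlinarith
    have key : x + s ^ 2 / 2 ≤ x ^ 2 / (2 * μ ^ 2) := by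
      rw [le_div_iff₀ (by positivity)]
      nlinarith [mul_lt_mul_of_pos_left hx2 (by positivity : (0:ℝ) < μ ^ 2)]
    have h4 : Real.exp x * y ≤ Real.exp (x ^ 2 / (2 * μ ^ 2)) := by
      calc Real.exp x * y ≤ Real.exp x * Real.exp (s ^ 2 / 2) :=
            mul_le_mul_of_nonneg_left hy1 (Real.exp_pos _).le
        _ = Real.exp (x + s ^ 2 / 2) := (Real.exp_add _ _).symm
        _ ≤ Real.exp (x ^ 2 / (2 * μ ^ 2)) := Real.exp_le_exp.mpr key
    nlinarith [mul_nonneg (Real.exp_pos (2 * μ ^ 2)).le hpsi0]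
end

section
/- Let T > 0 and β, γ ≥ 0 with β + γ > 0. Let μ_{β,γ} : [0, T] → [0, ∞) be the unique continuous, strictly increasing function with μ_{β,γ}(0) = 0 that is differentiable on (0, T] and satisfies μ_{β,γ}′(s) = γ²/(2·μ_{β,γ}(s)) + (√2/2)·β for s ∈ (0, T], and set ν_{β,γ}(s) := ∫₀ˢ [ (√2/2)·β·μ_{β,γ}(r) + (γ²/2)·(1 + √2/μ_{β,γ}(r)) ] dr (a finite integral for every s ∈ [0, T]). Define φ(s, x) := (x+e)·exp( μ_{β,γ}(s)·√(2·ln(x+e)) + ν_{β,γ}(s) ) for (s, x) ∈ [0, T] × [0, ∞). Then φ is continuous on [0, T] × [0, ∞), the partial derivatives ∂ₛφ, ∂ₓφ, ∂ₓₓφ exist and are continuous on (0, T] × [0, ∞), and for every s ∈ (0, T], every x ≥ 0, and every z ∈ ℝ^d (d ≥ 1): −∂ₓφ(s, x)·( β·x·√(ln x)·𝟙_{x>1} + γ·|z| ) + (1/2)·∂ₓₓφ(s, x)·|z|² + ∂ₛφ(s, x) ≥ 0. -/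
/-!
Write `g x = √(2 log (x + e))`, so that `g ≥ √2` and `g' = 1 / ((x + e) g)`. With
`A = exp (μ g + ν)` one gets `∂ₓφ = A (1 + μ/g)`, `∂ₓₓφ = A μ/((x+e) g) (1 + μ/g - 1/g²)`
and `∂ₛφ = (x + e) A (μ' g + ν')`. After dividing by `A`, the `β`-term is absorbed since
`x √(ln x) ≤ (x + e) g / √2`, and the `γ`-term is a quadratic in `‖z‖` with nonpositive
discriminant, which comes down to `(g + μ)² g ≤ (g² + μ g - 1)(g + μ + √2)` for `g ≥ √2`.
The integrand of `ν` is singular at `0` only through `γ² / μ`, which is integrable because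
`(μ² - γ² s)' = √2 β μ ≥ 0` forces `μ s ≥ γ √s`.
-/

open Real Set MeasureTheory

noncomputable def sqrtTwoLog (x : ℝ) : ℝ := √(2 * log (x + exp 1))

section SqrtTwoLog

variable {x : ℝ}

lemma add_exp_one_pos (hx : 0 ≤ x) : 0 < x + exp 1 := by positivity

lemma one_le_log_add_exp_one (hx : 0 ≤ x) : 1 ≤ log (x + exp 1) := by
  rw [le_log_iff_exp_le (add_exp_one_pos hx)]
  linarith

lemma sqrt_two_le_sqrtTwoLog (hx : 0 ≤ x) : √2 ≤ sqrtTwoLog x :=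
  sqrt_le_sqrt (by linarith [one_le_log_add_exp_one hx])

lemma sqrtTwoLog_pos (hx : 0 ≤ x) : 0 < sqrtTwoLog x :=
  (sqrt_pos.2 two_pos).trans_le (sqrt_two_le_sqrtTwoLog hx)

lemma hasDerivAt_sqrtTwoLog (hx : 0 ≤ x) :
    HasDerivAt sqrtTwoLog ((x + exp 1) * sqrtTwoLog x)⁻¹ x := by
  have hlog : HasDerivAt (fun u => 2 * log (u + exp 1)) (2 * (x + exp 1)⁻¹) x := by
    simpa using (((hasDerivAt_id x).add_const (exp 1)).log (add_exp_one_pos hx).ne').const_mul 2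
  have := sqrtTwoLog_pos hx
  refine (hlog.sqrt (by linarith [one_le_log_add_exp_one hx])).congr_deriv ?_
  rw [← sqrtTwoLog]
  field_simp

@[fun_prop]
lemma continuousOn_sqrtTwoLog : ContinuousOn sqrtTwoLog (Ici 0) :=
  fun _ hx => (hasDerivAt_sqrtTwoLog hx).continuousAt.continuousWithinAt

lemma mul_sqrt_log_le (hx : 0 < x) :
    x * √(log x) ≤ √2 / 2 * ((x + exp 1) * sqrtTwoLog x) := by
  have hsplit : √2 / 2 * sqrtTwoLog x = √(log (x + exp 1)) := by
    rw [sqrtTwoLog, sqrt_mul zero_le_two, ← mul_assoc, div_mul_eq_mul_div,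
      mul_self_sqrt zero_le_two]
    ring
  calc x * √(log x) ≤ (x + exp 1) * √(log (x + exp 1)) := by
        gcongr <;> linarith [exp_pos 1]
    _ = √2 / 2 * ((x + exp 1) * sqrtTwoLog x) := by rw [← hsplit]; ring

lemma ite_mul_sqrt_log_le {β : ℝ} (hβ : 0 ≤ β) (hx : 0 ≤ x) :
    (if 1 < x then β * x * √(log x) else 0)
      ≤ √2 / 2 * β * ((x + exp 1) * sqrtTwoLog x) := by
  split_ifs with h
  · calc β * x * √(log x) = β * (x * √(log x)) := by ring
      _ ≤ β * (√2 / 2 * ((x + exp 1) * sqrtTwoLog x)) :=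
        mul_le_mul_of_nonneg_left (mul_sqrt_log_le (by linarith)) hβ
      _ = _ := by ring
  · have := sqrtTwoLog_pos hx
    positivity

end SqrtTwoLog

section Profile

variable (a b : ℝ) {x : ℝ}

lemma hasDerivAt_exp_mul_sqrtTwoLog (hx : 0 ≤ x) :
    HasDerivAt (fun u => exp (a * sqrtTwoLog u + b))
      (exp (a * sqrtTwoLog x + b) * (a * ((x + exp 1) * sqrtTwoLog x)⁻¹)) x :=
  (((hasDerivAt_sqrtTwoLog hx).const_mul a).add_const b).exp

lemma hasDerivAt_add_exp_one_mul_exp_mul_sqrtTwoLog (hx : 0 ≤ x) :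
    HasDerivAt (fun u => (u + exp 1) * exp (a * sqrtTwoLog u + b))
      (exp (a * sqrtTwoLog x + b) * (1 + a / sqrtTwoLog x)) x := by
  have := add_exp_one_pos hx
  have := sqrtTwoLog_pos hx
  refine (((hasDerivAt_id' x).add_const _).mul
    (hasDerivAt_exp_mul_sqrtTwoLog a b hx)).congr_deriv ?_
  field_simp

lemma hasDerivAt_exp_mul_sqrtTwoLog_mul_one_add_div (hx : 0 ≤ x) :
    HasDerivAt (fun u => exp (a * sqrtTwoLog u + b) * (1 + a / sqrtTwoLog u))
      (exp (a * sqrtTwoLog x + b) * (a / ((x + exp 1) * sqrtTwoLog x)) *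
        (1 + a / sqrtTwoLog x - 1 / sqrtTwoLog x ^ 2)) x := by
  have := add_exp_one_pos hx
  have hg := sqrtTwoLog_pos hx
  have hquot := ((hasDerivAt_const x a).div (hasDerivAt_sqrtTwoLog hx) hg.ne').const_add 1
  refine ((hasDerivAt_exp_mul_sqrtTwoLog a b hx).mul hquot).congr_deriv ?_
  simp only [Pi.div_apply]
  field_simp
  ring

end Profile

section Generator

variable {β γ a g E r X : ℝ}

lemma quadratic_nonneg_of_sq_le {c b k : ℝ} (hc : 0 < c) (h : b ^ 2 ≤ c * k) (t : ℝ) :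
    0 ≤ c * t ^ 2 - 2 * b * t + k := by
  nlinarith [sq_nonneg (c * t - b)]

lemma sq_add_mul_le_of_sqrt_two_le (ha : 0 ≤ a) (hg : √2 ≤ g) :
    (g + a) ^ 2 * g ≤ (g ^ 2 + a * g - 1) * (g + a + √2) := by
  have h2 : √2 ^ 2 = 2 := sq_sqrt zero_le_two
  have hs : 0 < √2 := sqrt_pos.2 two_pos
  nlinarith [mul_nonneg (sub_nonneg.2 hg) (hs.le.trans hg), mul_nonneg (sub_nonneg.2 hg) ha]

lemma one_add_div_mul_le (ha : 0 ≤ a) (hg : 0 < g) (hX : X ≤ √2 / 2 * β * (E * g)) :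
    (1 + a / g) * X ≤ √2 / 2 * β * E * (g + a) :=
  calc (1 + a / g) * X ≤ (1 + a / g) * (√2 / 2 * β * (E * g)) := by gcongr
    _ = √2 / 2 * β * E * (g + a) := by field_simp

lemma mul_one_add_div_mul_le (ha : 0 < a) (hg : √2 ≤ g) (hE : 0 < E) :
    γ * (1 + a / g) * r ≤ 1 / 2 * (a / (E * g) * (1 + a / g - 1 / g ^ 2)) * r ^ 2
      + E * (γ ^ 2 * (g + a + √2) / (2 * a)) := by
  have hg0 : 0 < g := (sqrt_pos.2 two_pos).trans_le hg
  have hQ : 0 < 1 + a / g - 1 / g ^ 2 := by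
    have : 1 / g ^ 2 ≤ 1 / 2 := by
      gcongr
      simpa using pow_le_pow_left₀ (sqrt_nonneg 2) hg 2
    have : 0 ≤ a / g := by positivity
    linarith
  have hPQ : (1 + a / g) ^ 2 * g ≤ (1 + a / g - 1 / g ^ 2) * (g + a + √2) := by
    have hPg : (1 + a / g) ^ 2 * g = (g + a) ^ 2 * g / g ^ 2 := by field_simp
    have hQg : (1 + a / g - 1 / g ^ 2) * (g + a + √2)
        = (g ^ 2 + a * g - 1) * (g + a + √2) / g ^ 2 := by
      field_simp
    rw [hPg, hQg]
    exact div_le_div_of_nonneg_right (sq_add_mul_le_of_sqrt_two_le ha.le hg) (by positivity)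
  have hdisc : (γ * (1 + a / g) / 2) ^ 2
      ≤ 1 / 2 * (a / (E * g) * (1 + a / g - 1 / g ^ 2)) * (E * (γ ^ 2 * (g + a + √2) / (2 * a))) :=
    calc (γ * (1 + a / g) / 2) ^ 2 = γ ^ 2 / (4 * g) * ((1 + a / g) ^ 2 * g) := by
          field_simp
          ring
      _ ≤ γ ^ 2 / (4 * g) * ((1 + a / g - 1 / g ^ 2) * (g + a + √2)) := by gcongr
      _ = _ := by field_simp; ring
  linear_combination quadratic_nonneg_of_sq_le (by positivity) hdisc r

lemma generator_nonneg (ha : 0 < a) (hg : √2 ≤ g) (hE : 0 < E)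
    (hX : X ≤ √2 / 2 * β * (E * g)) :
    0 ≤ -(1 + a / g) * (X + γ * r) + 1 / 2 * (a / (E * g) * (1 + a / g - 1 / g ^ 2)) * r ^ 2
      + E * ((γ ^ 2 / (2 * a) + √2 / 2 * β) * g
        + (√2 / 2 * β * a + γ ^ 2 / 2 * (1 + √2 / a))) := by
  have hdrift := one_add_div_mul_le ha.le ((sqrt_pos.2 two_pos).trans_le hg) hX
  have hdiff := mul_one_add_div_mul_le (γ := γ) (r := r) ha hg hE
  have hsplit : E * ((γ ^ 2 / (2 * a) + √2 / 2 * β) * g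
      + (√2 / 2 * β * a + γ ^ 2 / 2 * (1 + √2 / a)))
      = √2 / 2 * β * E * (g + a) + E * (γ ^ 2 * (g + a + √2) / (2 * a)) := by
    field_simp
    ring
  linear_combination hdrift + hdiff - hsplit

end Generator

section Primitive

variable {E : Type*} [NormedAddCommGroup E] [NormedSpace ℝ E] {f F : ℝ → E} {a b : ℝ}

theorem continuousOn_Icc_of_eq_integral (hab : a ≤ b) (hf : IntegrableOn f (Icc a b))
    (hF : ∀ s ∈ Icc a b, F s = ∫ t in a..s, f t) : ContinuousOn F (Icc a b) := by
  have h := intervalIntegral.continuousOn_primitive_interval (μ := volume) (f := f)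
    (by rwa [uIcc_of_le hab])
  rw [uIcc_of_le hab] at h
  exact h.congr hF

theorem hasDerivWithinAt_Ioc_of_eq_integral [CompleteSpace E] (hf : IntegrableOn f (Icc a b))
    (hfc : ContinuousOn f (Ioc a b)) (hF : ∀ s ∈ Icc a b, F s = ∫ t in a..s, f t) :
    ∀ s ∈ Ioc a b, HasDerivWithinAt F (f s) (Ioc a b) s := by
  intro s hs
  -- FTC is applied within `Icc c b`, which agrees with `Ioc a b` near `s`.
  obtain ⟨c, hac, hcs⟩ := exists_between hs.1
  have hsub : Icc c b ⊆ Ioc a b := Icc_subset_Ioc hac le_rfl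
  have : Fact (s ∈ Icc c b) := ⟨⟨hcs.le, hs.2⟩⟩
  have hint : IntervalIntegrable f volume a s :=
    (intervalIntegrable_iff_integrableOn_Icc_of_le hs.1.le).2
      (hf.mono_set (Icc_subset_Icc_right hs.2))
  have hderiv := intervalIntegral.integral_hasDerivWithinAt_right (s := Icc c b) (t := Icc c b)
    hint ((hfc.mono hsub).stronglyMeasurableAtFilter_nhdsWithin measurableSet_Icc s)
    ((hfc s hs).mono hsub)
  refine (hderiv.mono_of_mem_nhdsWithin ?_).congr (fun t ht => hF t (Ioc_subset_Icc_self ht))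
    (hF s (Ioc_subset_Icc_self hs))
  exact mem_nhdsWithin.2 ⟨Ioi c, isOpen_Ioi, hcs, fun t ⟨htc, hta⟩ => ⟨htc.le, hta.2⟩⟩

end Primitive

section Coefficients

variable {T γ κ : ℝ} {μ : ℝ → ℝ}

lemma mul_sqrt_le_of_hasDerivWithinAt (hγ : 0 ≤ γ) (hκ : 0 ≤ κ)
    (hμc : ContinuousOn μ (Icc 0 T)) (hμ0 : μ 0 = 0) (hμpos : ∀ s ∈ Ioc 0 T, 0 < μ s)
    (hμ' : ∀ s ∈ Ioc 0 T, HasDerivWithinAt μ (γ ^ 2 / (2 * μ s) + κ) (Icc 0 T) s)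
    {r : ℝ} (hr : r ∈ Ioc 0 T) : γ * √r ≤ μ r := by
  have hmono : MonotoneOn (fun s => μ s ^ 2 - γ ^ 2 * s) (Icc 0 T) := by
    refine monotoneOn_of_hasDerivWithinAt_nonneg (f' := fun s => 2 * κ * μ s) (convex_Icc 0 T)
      ((hμc.pow 2).sub (continuousOn_const.mul continuousOn_id)) ?_ ?_ <;> rw [interior_Icc]
    · intro s hs
      have := hμpos s (Ioo_subset_Ioc_self hs)
      have hd := (hμ' s (Ioo_subset_Ioc_self hs)).mono Ioo_subset_Icc_self
      exact ((hd.pow 2).sub ((hasDerivWithinAt_id s _).const_mul (γ ^ 2))).congr_deriv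
        (by field_simp; ring)
    · intro s hs
      have := hμpos s (Ioo_subset_Ioc_self hs)
      positivity
  have hμ2 : γ ^ 2 * r ≤ μ r ^ 2 := by
    have := hmono ⟨le_rfl, hr.1.le.trans hr.2⟩ (Ioc_subset_Icc_self hr) hr.1.le
    simp only [hμ0] at this
    linarith
  rw [← pow_le_pow_iff_left₀ (by positivity) (hμpos r hr).le two_ne_zero, mul_pow,
    sq_sqrt hr.1.le]
  exact hμ2

lemma integrableOn_sq_div (hγ : 0 ≤ γ) (hμc : ContinuousOn μ (Ioc 0 T))
    (hμ : ∀ r ∈ Ioc 0 T, γ * √r ≤ μ r) :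
    IntegrableOn (fun r => γ ^ 2 / μ r) (Ioc 0 T) := by
  rcases hγ.eq_or_lt with rfl | hγ
  · simp
  have hμpos : ∀ r ∈ Ioc 0 T, 0 < μ r := fun r hr =>
    (mul_pos hγ (sqrt_pos.2 hr.1)).trans_le (hμ r hr)
  have hdom : IntegrableOn (fun r : ℝ => γ * r ^ (-(1 / 2) : ℝ)) (Ioc 0 T) :=
    (intervalIntegral.intervalIntegrable_rpow' (a := 0) (b := T) (by norm_num)).1.const_mul γ
  refine hdom.mono'
    ((continuousOn_const.div hμc fun r hr => (hμpos r hr).ne').aestronglyMeasurable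
      measurableSet_Ioc) ((ae_restrict_iff' measurableSet_Ioc).2 (ae_of_all _ fun r hr => ?_))
  have := hμpos r hr
  have : 0 < √r := sqrt_pos.2 hr.1
  rw [norm_of_nonneg (by positivity), rpow_neg hr.1.le, ← sqrt_eq_rpow]
  calc γ ^ 2 / μ r ≤ γ ^ 2 / (γ * √r) := by gcongr; exact hμ r hr
    _ = γ * (√r)⁻¹ := by field_simp

lemma integrableOn_nu_integrand {β : ℝ} (hβ : 0 ≤ β) (hγ : 0 ≤ γ)
    (hμc : ContinuousOn μ (Icc 0 T)) (hμ0 : μ 0 = 0) (hμpos : ∀ s ∈ Ioc 0 T, 0 < μ s)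
    (hμ' : ∀ s ∈ Ioc 0 T,
      HasDerivWithinAt μ (γ ^ 2 / (2 * μ s) + √2 / 2 * β) (Icc 0 T) s) :
    IntegrableOn (fun r => √2 / 2 * β * μ r + γ ^ 2 / 2 * (1 + √2 / μ r)) (Icc 0 T) := by
  rw [integrableOn_Icc_iff_integrableOn_Ioc]
  have hsq := integrableOn_sq_div hγ (hμc.mono Ioc_subset_Icc_self)
    fun r hr => mul_sqrt_le_of_hasDerivWithinAt hγ (by positivity) hμc hμ0 hμpos hμ' hr
  have h : IntegrableOn (fun r => √2 / 2 * β * μ r + γ ^ 2 / 2 + √2 / 2 * (γ ^ 2 / μ r))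
      (Ioc 0 T) :=
    (((hμc.integrableOn_Icc.mono_set Ioc_subset_Icc_self).const_mul (√2 / 2 * β)).add
      (integrableOn_const measure_Ioc_lt_top.ne)).add (hsq.const_mul (√2 / 2))
  exact h.congr_fun (fun r _ => by ring) measurableSet_Ioc

end Coefficients

theorem stmt_9_general (T β γ : ℝ) (d : ℕ)
    (hT : 0 < T) (hβ : 0 ≤ β) (hγ : 0 ≤ γ)
    (μ : ℝ → ℝ)
    (hμc : ContinuousOn μ (Set.Icc 0 T))
    (hμ0 : μ 0 = 0) (hμpos : ∀ s ∈ Set.Ioc 0 T, 0 < μ s)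
    (hμderiv : ∀ s ∈ Set.Ioc 0 T,
      HasDerivWithinAt μ (γ ^ 2 / (2 * μ s) + Real.sqrt 2 / 2 * β) (Set.Icc 0 T) s)
    (ν : ℝ → ℝ)
    (hν : ∀ s ∈ Set.Icc 0 T,
      ν s = ∫ r in (0 : ℝ)..s,
        (Real.sqrt 2 / 2 * β * μ r + γ ^ 2 / 2 * (1 + Real.sqrt 2 / μ r)))
    (φ : ℝ → ℝ → ℝ)
    (hφ : ∀ s x, φ s x =
      (x + Real.exp 1) *
        Real.exp (μ s * Real.sqrt (2 * Real.log (x + Real.exp 1)) + ν s)) :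
    ContinuousOn (fun p : ℝ × ℝ => φ p.1 p.2) (Set.Icc 0 T ×ˢ Set.Ici 0) ∧
    ∃ φs φx φxx : ℝ → ℝ → ℝ,
      (∀ s ∈ Set.Ioc 0 T, ∀ x ∈ Set.Ici (0 : ℝ),
        HasDerivWithinAt (fun t => φ t x) (φs s x) (Set.Ioc 0 T) s ∧
        HasDerivWithinAt (fun u => φ s u) (φx s x) (Set.Ici 0) x ∧
        HasDerivWithinAt (fun u => φx s u) (φxx s x) (Set.Ici 0) x) ∧
      ContinuousOn (fun p : ℝ × ℝ => φs p.1 p.2) (Set.Ioc 0 T ×ˢ Set.Ici 0) ∧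
      ContinuousOn (fun p : ℝ × ℝ => φx p.1 p.2) (Set.Ioc 0 T ×ˢ Set.Ici 0) ∧
      ContinuousOn (fun p : ℝ × ℝ => φxx p.1 p.2) (Set.Ioc 0 T ×ˢ Set.Ici 0) ∧
      ∀ s ∈ Set.Ioc 0 T, ∀ x ∈ Set.Ici (0 : ℝ), ∀ z : EuclideanSpace ℝ (Fin d),
        0 ≤ -φx s x * ((if 1 < x then β * x * Real.sqrt (Real.log x) else 0) + γ * ‖z‖)
            + 1 / 2 * φxx s x * ‖z‖ ^ 2 + φs s x := by
  have hint := integrableOn_nu_integrand hβ hγ hμc hμ0 hμpos hμderiv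
  have hνc := continuousOn_Icc_of_eq_integral hT.le hint hν
  have hν' := hasDerivWithinAt_Ioc_of_eq_integral hint (by
    have := hμc.mono Ioc_subset_Icc_self
    fun_prop (disch := exact fun s hs => (hμpos s hs).ne')) hν
  have hφg : ∀ s x, φ s x = (x + exp 1) * exp (μ s * sqrtTwoLog x + ν s) := hφ
  simp only [hφg]
  refine ⟨?cont, fun s x => (x + exp 1) * exp (μ s * sqrtTwoLog x + ν s) *
      ((γ ^ 2 / (2 * μ s) + √2 / 2 * β) * sqrtTwoLog x
        + (√2 / 2 * β * μ s + γ ^ 2 / 2 * (1 + √2 / μ s))),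
    fun s x => exp (μ s * sqrtTwoLog x + ν s) * (1 + μ s / sqrtTwoLog x),
    fun s x => exp (μ s * sqrtTwoLog x + ν s) * (μ s / ((x + exp 1) * sqrtTwoLog x)) *
      (1 + μ s / sqrtTwoLog x - 1 / sqrtTwoLog x ^ 2),
    fun s hs x hx => ⟨?ds, ?dx, ?dxx⟩, ?cs, ?cx, ?cxx, fun s hs x hx z => ?ineq⟩
  case ds =>
    exact ((((hμderiv s hs).mono Ioc_subset_Icc_self).mul_const _).add (hν' s hs)).exp.const_mul _
      |>.congr_deriv (by simp only [Pi.add_apply]; ring)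
  case dx => exact (hasDerivAt_add_exp_one_mul_exp_mul_sqrtTwoLog _ _ hx).hasDerivWithinAt
  case dxx => exact (hasDerivAt_exp_mul_sqrtTwoLog_mul_one_add_div _ _ hx).hasDerivWithinAt
  case ineq =>
    have hineq := generator_nonneg (γ := γ) (r := ‖z‖) (hμpos s hs)
      (sqrt_two_le_sqrtTwoLog hx) (add_exp_one_pos hx) (ite_mul_sqrt_log_le hβ hx)
    refine (mul_nonneg (exp_pos (μ s * sqrtTwoLog x + ν s)).le hineq).trans_eq ?_
    ring
  all_goals fun_prop (disch := first
    | exact mapsTo_fst_prod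
    | exact mapsTo_snd_prod
    | exact fun p hp => Ioc_subset_Icc_self hp.1
    | rintro ⟨s, x⟩ ⟨hs, hx⟩
      have := hμpos s hs
      have := sqrtTwoLog_pos hx
      have := add_exp_one_pos hx
      positivity)

/-- Proposition 3.2: with `μ = μ_{β,γ}` the solution of the singular ODE (3.8),
`ν = ν_{β,γ}` given by (3.9) and `φ(s,x) = (x+e)·exp(μ(s)·√(2·ln(x+e)) + ν(s))`,
the function `φ` is continuous on `[0,T]×[0,∞)`, is `C^{1,2}` on `(0,T]×[0,∞)`
(its partial derivatives `∂ₛφ, ∂ₓφ, ∂ₓₓφ` exist and are continuous there), and satisfies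
`−∂ₓφ·(β·x·√(ln x)·𝟙_{x>1} + γ·|z|) + (1/2)·∂ₓₓφ·|z|² + ∂ₛφ ≥ 0` for all
`s ∈ (0,T]`, `x ≥ 0`, `z ∈ ℝ^d`. -/
theorem stmt_9 (T β γ : ℝ) (d : ℕ) (hd : 1 ≤ d)
    (hT : 0 < T) (hβ : 0 ≤ β) (hγ : 0 ≤ γ) (hβγ : 0 < β + γ)
    (μ : ℝ → ℝ)
    (hμc : ContinuousOn μ (Set.Icc 0 T)) (hμmono : StrictMonoOn μ (Set.Icc 0 T))
    (hμ0 : μ 0 = 0) (hμpos : ∀ s ∈ Set.Ioc 0 T, 0 < μ s)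
    (hμderiv : ∀ s ∈ Set.Ioc 0 T,
      HasDerivWithinAt μ (γ ^ 2 / (2 * μ s) + Real.sqrt 2 / 2 * β) (Set.Icc 0 T) s)
    (ν : ℝ → ℝ)
    (hν : ∀ s ∈ Set.Icc 0 T,
      ν s = ∫ r in (0 : ℝ)..s,
        (Real.sqrt 2 / 2 * β * μ r + γ ^ 2 / 2 * (1 + Real.sqrt 2 / μ r)))
    (φ : ℝ → ℝ → ℝ)
    (hφ : ∀ s x, φ s x =
      (x + Real.exp 1) *
        Real.exp (μ s * Real.sqrt (2 * Real.log (x + Real.exp 1)) + ν s)) :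
    ContinuousOn (fun p : ℝ × ℝ => φ p.1 p.2) (Set.Icc 0 T ×ˢ Set.Ici 0) ∧
    ∃ φs φx φxx : ℝ → ℝ → ℝ,
      (∀ s ∈ Set.Ioc 0 T, ∀ x ∈ Set.Ici (0 : ℝ),
        HasDerivWithinAt (fun t => φ t x) (φs s x) (Set.Ioc 0 T) s ∧
        HasDerivWithinAt (fun u => φ s u) (φx s x) (Set.Ici 0) x ∧
        HasDerivWithinAt (fun u => φx s u) (φxx s x) (Set.Ici 0) x) ∧
      ContinuousOn (fun p : ℝ × ℝ => φs p.1 p.2) (Set.Ioc 0 T ×ˢ Set.Ici 0) ∧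
      ContinuousOn (fun p : ℝ × ℝ => φx p.1 p.2) (Set.Ioc 0 T ×ˢ Set.Ici 0) ∧
      ContinuousOn (fun p : ℝ × ℝ => φxx p.1 p.2) (Set.Ioc 0 T ×ˢ Set.Ici 0) ∧
      ∀ s ∈ Set.Ioc 0 T, ∀ x ∈ Set.Ici (0 : ℝ), ∀ z : EuclideanSpace ℝ (Fin d),
        0 ≤ -φx s x * ((if 1 < x then β * x * Real.sqrt (Real.log x) else 0) + γ * ‖z‖)
            + 1 / 2 * φxx s x * ‖z‖ ^ 2 + φs s x :=
  stmt_9_general T β γ d hT hβ hγ μ hμc hμ0 hμpos hμderiv ν hν φ hφ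
end

section
/- Let T > 0 and β, γ ≥ 0 with β + γ > 0. Let μ_{β,γ} : [0, T] → [0, ∞) be the unique continuous, strictly increasing function with μ_{β,γ}(0) = 0 that is differentiable on (0, T] and satisfies μ_{β,γ}′(s) = γ²/(2·μ_{β,γ}(s)) + (√2/2)·β for s ∈ (0, T], set ν_{β,γ}(s) := ∫₀ˢ [ (√2/2)·β·μ_{β,γ}(r) + (γ²/2)·(1 + √2/μ_{β,γ}(r)) ] dr, and define φ(s, x) := (x+e)·exp( μ_{β,γ}(s)·√(2·ln(x+e)) + ν_{β,γ}(s) ). Then there exists a constant K > 0, depending only on β, γ, T, such that for all (s, x) ∈ [0, T] × [0, ∞): ψ(x, μ_{β,γ}(s)) ≤ φ(s, x) ≤ K·ψ(x, μ_{β,γ}(s)) + K. -/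
open MeasureTheory

/-- Proposition 3.4: with `μ = μ_{β,γ}` the solution of the singular ODE (3.8),
`ν = ν_{β,γ}` given by (3.9) and `φ(s,x) = (x+e)·exp(μ(s)·√(2·ln(x+e)) + ν(s))`,
there is a constant `K > 0` (depending only on `β, γ, T`) such that
`ψ(x, μ(s)) ≤ φ(s, x) ≤ K·ψ(x, μ(s)) + K` for all `(s, x) ∈ [0,T]×[0,∞)`. -/
theorem stmt_10 (T β γ : ℝ) (hT : 0 < T) (hβ : 0 ≤ β) (hγ : 0 ≤ γ) (hβγ : 0 < β + γ)
    (μ : ℝ → ℝ)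
    (hμc : ContinuousOn μ (Set.Icc 0 T)) (hμmono : StrictMonoOn μ (Set.Icc 0 T))
    (hμ0 : μ 0 = 0) (hμpos : ∀ s ∈ Set.Ioc 0 T, 0 < μ s)
    (hμderiv : ∀ s ∈ Set.Ioc 0 T,
      HasDerivWithinAt μ (γ ^ 2 / (2 * μ s) + Real.sqrt 2 / 2 * β) (Set.Icc 0 T) s)
    (ν : ℝ → ℝ)
    (hνint : ∀ s ∈ Set.Icc 0 T, IntegrableOn
      (fun r => Real.sqrt 2 / 2 * β * μ r + γ ^ 2 / 2 * (1 + Real.sqrt 2 / μ r))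
      (Set.Ioc 0 s))
    (hν : ∀ s ∈ Set.Icc 0 T,
      ν s = ∫ r in (0 : ℝ)..s,
        (Real.sqrt 2 / 2 * β * μ r + γ ^ 2 / 2 * (1 + Real.sqrt 2 / μ r)))
    (φ : ℝ → ℝ → ℝ)
    (hφ : ∀ s x, φ s x =
      (x + Real.exp 1) *
        Real.exp (μ s * Real.sqrt (2 * Real.log (x + Real.exp 1)) + ν s)) :
    ∃ K : ℝ, 0 < K ∧ ∀ s ∈ Set.Icc 0 T, ∀ x : ℝ, 0 ≤ x →
      psi x (μ s) ≤ φ s x ∧ φ s x ≤ K * psi x (μ s) + K := by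
  set f : ℝ → ℝ :=
    fun r => Real.sqrt 2 / 2 * β * μ r + γ ^ 2 / 2 * (1 + Real.sqrt 2 / μ r) with hf
  have hTmem : T ∈ Set.Icc (0:ℝ) T := ⟨hT.le, le_rfl⟩
  have h0mem : (0:ℝ) ∈ Set.Icc (0:ℝ) T := ⟨le_rfl, hT.le⟩
  have he1 : (1:ℝ) ≤ Real.exp 1 := by
    have := Real.add_one_le_exp (1:ℝ); linarith
  -- nonnegativity of f on Icc 0 T
  have hfnn : ∀ r ∈ Set.Icc (0:ℝ) T, 0 ≤ f r := by
    intro r hr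
    rcases eq_or_lt_of_le hr.1 with h | h
    · simp [hf, ← h, hμ0]
      positivity
    · have hμr : 0 < μ r := hμpos r ⟨h, hr.2⟩
      have h1 : 0 ≤ Real.sqrt 2 / 2 * β * μ r := by positivity
      have h2 : 0 ≤ γ ^ 2 / 2 * (1 + Real.sqrt 2 / μ r) := by positivity
      simpa [hf] using add_nonneg h1 h2
  -- μ bounds
  have hμnn : ∀ s ∈ Set.Icc (0:ℝ) T, 0 ≤ μ s := by
    intro s hs
    rcases eq_or_lt_of_le hs.1 with h | h
    · simp [← h, hμ0]
    · exact (hμpos s ⟨h, hs.2⟩).le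
  have hμleT : ∀ s ∈ Set.Icc (0:ℝ) T, μ s ≤ μ T := by
    intro s hs
    exact hμmono.monotoneOn hs hTmem hs.2
  have hμT : 0 ≤ μ T := hμnn T hTmem
  -- ν bounds
  have hνnn : ∀ s ∈ Set.Icc (0:ℝ) T, 0 ≤ ν s := by
    intro s hs
    rw [hν s hs]
    apply intervalIntegral.integral_nonneg hs.1
    intro u hu
    exact hfnn u ⟨hu.1, hu.2.trans hs.2⟩
  have hνleT : ∀ s ∈ Set.Icc (0:ℝ) T, ν s ≤ ν T := by
    intro s hs
    rw [hν s hs, hν T hTmem, intervalIntegral.integral_of_le hs.1,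
      intervalIntegral.integral_of_le hT.le]
    apply setIntegral_mono_set (hνint T hTmem)
    · filter_upwards [ae_restrict_mem measurableSet_Ioc] with r hr
      exact hfnn r ⟨hr.1.le, hr.2⟩
    · exact (Set.Ioc_subset_Ioc_right hs.2).eventuallyLE
  refine ⟨(1 + Real.exp 1) * Real.exp (ν T) * Real.exp (μ T * Real.sqrt 2) *
      Real.exp (μ T * Real.sqrt (2 * Real.log 2)), by positivity, ?_⟩
  intro s hs x hx
  have hμs : 0 ≤ μ s := hμnn s hs
  have hνs : 0 ≤ ν s := hνnn s hs
  have hμsT : μ s ≤ μ T := hμleT s hs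
  have hνsT : ν s ≤ ν T := hνleT s hs
  have hxe : (0:ℝ) < x + Real.exp 1 := by linarith
  have h1x : (0:ℝ) < 1 + x := by linarith
  have hL : 0 ≤ Real.log (1 + x) := Real.log_nonneg (by linarith)
  have hlog1 : Real.log (1 + x) ≤ Real.log (x + Real.exp 1) :=
    Real.log_le_log h1x (by linarith)
  have hlog2 : Real.log (x + Real.exp 1) ≤ 1 + Real.log (1 + x) := by
    have h : x + Real.exp 1 ≤ Real.exp 1 * (1 + x) := by nlinarith
    calc Real.log (x + Real.exp 1) ≤ Real.log (Real.exp 1 * (1 + x)) :=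
          Real.log_le_log hxe h
      _ = 1 + Real.log (1 + x) := by
          rw [Real.log_mul (by positivity) (by positivity), Real.log_exp]
  have hLe : 0 ≤ Real.log (x + Real.exp 1) := hL.trans hlog1
  have hsqrt1 : Real.sqrt (2 * Real.log (1 + x)) ≤
      Real.sqrt (2 * Real.log (x + Real.exp 1)) :=
    Real.sqrt_le_sqrt (by linarith)
  have hsqrt2 : Real.sqrt (2 * Real.log (x + Real.exp 1)) ≤
      Real.sqrt 2 + Real.sqrt (2 * Real.log (1 + x)) := by
    have ha : Real.sqrt 2 ^ 2 = 2 := Real.sq_sqrt (by norm_num)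
    have hb : Real.sqrt (2 * Real.log (1 + x)) ^ 2 = 2 * Real.log (1 + x) :=
      Real.sq_sqrt (by linarith)
    have h := Real.sqrt_le_sqrt (show 2 * Real.log (x + Real.exp 1) ≤
        (Real.sqrt 2 + Real.sqrt (2 * Real.log (1 + x))) ^ 2 by
      have h2 := Real.sqrt_nonneg 2
      have h3 := Real.sqrt_nonneg (2 * Real.log (1 + x))
      nlinarith)
    rwa [Real.sqrt_sq (by positivity)] at h
  have hψnn : 0 ≤ psi x (μ s) := by unfold psi; positivity
  constructor
  · -- lower bound
    rw [hφ, psi]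
    apply mul_le_mul (by linarith)
    · apply Real.exp_le_exp.mpr
      have := mul_le_mul_of_nonneg_left hsqrt1 hμs
      linarith
    · positivity
    · positivity
  · -- upper bound
    rw [hφ]
    set E := Real.exp (μ s * Real.sqrt (2 * Real.log (1 + x))) with hE
    have hEpos : 0 < E := Real.exp_pos _
    have hC : Real.exp (μ s * Real.sqrt (2 * Real.log (x + Real.exp 1)) + ν s) ≤
        Real.exp (ν T) * Real.exp (μ T * Real.sqrt 2) * E := by
      rw [hE, ← Real.exp_add, ← Real.exp_add]
      apply Real.exp_le_exp.mpr
      have h1 : μ s * Real.sqrt (2 * Real.log (x + Real.exp 1)) ≤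
          μ s * (Real.sqrt 2 + Real.sqrt (2 * Real.log (1 + x))) :=
        mul_le_mul_of_nonneg_left hsqrt2 hμs
      have h2 : μ s * Real.sqrt 2 ≤ μ T * Real.sqrt 2 :=
        mul_le_mul_of_nonneg_right hμsT (Real.sqrt_nonneg 2)
      have h3 : μ s * Real.sqrt (2 * Real.log (1 + x)) ≤
          μ s * Real.sqrt (2 * Real.log (1 + x)) := le_rfl
      nlinarith [Real.sqrt_nonneg (2 * Real.log (1 + x))]
    have step : (x + Real.exp 1) *
        Real.exp (μ s * Real.sqrt (2 * Real.log (x + Real.exp 1)) + ν s) ≤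
        (x + Real.exp 1) * (Real.exp (ν T) * Real.exp (μ T * Real.sqrt 2) * E) :=
      mul_le_mul_of_nonneg_left hC hxe.le
    refine step.trans ?_
    set A := Real.exp (ν T) with hA
    set B := Real.exp (μ T * Real.sqrt 2) with hB
    set D := Real.exp (μ T * Real.sqrt (2 * Real.log 2)) with hD
    have hApos : 0 < A := Real.exp_pos _
    have hBpos : 0 < B := Real.exp_pos _
    have hDpos : 0 < D := Real.exp_pos _
    have hfac : (1:ℝ) ≤ D := by
      rw [hD]; apply Real.one_le_exp; positivity
    have hψ : psi x (μ s) = x * E := rfl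
    rw [hψ]
    rcases le_or_gt 1 x with hx1 | hx1
    · have hxe2 : x + Real.exp 1 ≤ (1 + Real.exp 1) * x := by nlinarith
      have h1 : (x + Real.exp 1) * (A * B * E) ≤ (1 + Real.exp 1) * x * (A * B * E) :=
        mul_le_mul_of_nonneg_right hxe2 (by positivity)
      have h2 : (1 + Real.exp 1) * x * (A * B * E) ≤
          (1 + Real.exp 1) * A * B * D * (x * E) := by
        have : (1 + Real.exp 1) * x * (A * B * E) =
            ((1 + Real.exp 1) * A * B) * (x * E) := by ring
        rw [this]
        have h3 : (1 + Real.exp 1) * A * B ≤ (1 + Real.exp 1) * A * B * D :=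
          le_mul_of_one_le_right (by positivity) hfac
        exact mul_le_mul_of_nonneg_right h3 (by positivity)
      have hK : 0 < (1 + Real.exp 1) * A * B * D := by positivity
      linarith
    · have hE2 : E ≤ D := by
        rw [hE, hD]
        apply Real.exp_le_exp.mpr
        have hs2 : Real.sqrt (2 * Real.log (1 + x)) ≤ Real.sqrt (2 * Real.log 2) := by
          apply Real.sqrt_le_sqrt
          have : Real.log (1 + x) ≤ Real.log 2 := Real.log_le_log h1x (by linarith)
          linarith
        calc μ s * Real.sqrt (2 * Real.log (1 + x))
            ≤ μ s * Real.sqrt (2 * Real.log 2) := mul_le_mul_of_nonneg_left hs2 hμs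
          _ ≤ μ T * Real.sqrt (2 * Real.log 2) :=
              mul_le_mul_of_nonneg_right hμsT (Real.sqrt_nonneg _)
      have hbound : (x + Real.exp 1) * (A * B * E) ≤ (1 + Real.exp 1) * A * B * D := by
        have hx2 : x + Real.exp 1 ≤ 1 + Real.exp 1 := by linarith
        have h1 : (x + Real.exp 1) * (A * B * E) ≤ (1 + Real.exp 1) * (A * B * E) :=
          mul_le_mul_of_nonneg_right hx2 (by positivity)
        have h2 : (1 + Real.exp 1) * (A * B * E) ≤ (1 + Real.exp 1) * (A * B * D) := by
          apply mul_le_mul_of_nonneg_left _ (by positivity)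
          exact mul_le_mul_of_nonneg_left hE2 (by positivity)
        calc (x + Real.exp 1) * (A * B * E) ≤ (1 + Real.exp 1) * (A * B * E) := h1
          _ ≤ (1 + Real.exp 1) * (A * B * D) := h2
          _ = (1 + Real.exp 1) * A * B * D := by ring
      have hK : 0 < (1 + Real.exp 1) * A * B * D := by positivity
      have hxE : 0 ≤ (1 + Real.exp 1) * A * B * D * (x * E) :=
        mul_nonneg hK.le (by positivity)
      linarith
end

section
/- Let λ ∈ (0, 1/2), β ≥ 0, γ > 0, ε > 0, and T > 0. Let μ̄ : [0, T] → ℝ be the unique solution of the initial value problem μ̄(0) = ε, μ̄′(s) = ε·μ̄(s) + γ²·(1+ε)^{2λ+2}/((2λ+1)·μ̄(s)) + ε + β for s ∈ [0, T]. Then there exist a constant k ≥ e and a nondecreasing continuously differentiable function ν : [0, T] → [0, ∞) with ν(0) = 0 such that the function φ(s, x) := (x+k)·exp( μ̄(s)·(ln(x+k))^{λ+1/2} + ν(s) ) is C^{1,2} on [0, T] × [0, ∞) and satisfies, for every (s, x) ∈ [0, T] × [0, ∞) and every z ∈ ℝ^d (d ≥ 1): −∂ₓφ(s, x)·( β·x·(ln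 x)^{λ+1/2}·𝟙_{x>1} + γ·|z|·|ln|z||^λ ) + (1/2)·∂ₓₓφ(s, x)·|z|² + ∂ₛφ(s, x) ≥ 0, where the map z ↦ |z|·|ln|z||^λ is extended by the value 0 at z = 0. -/
/-!
Put `P = x + k`, `L = log P` and `w = μ̄(s)·(λ+1/2)·L^(λ-1/2)`, so that `w → 0` as `P → ∞`.
Dividing the left-hand side by `exp (μ̄ L^(λ+1/2) + ν)` leaves an explicit expression in which
`∂ₛφ` contributes the positive term `P·(μ̄' L^(λ+1/2) + ν')` and `∂ₓₓφ` the diffusion term, which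
is at least `(1-δ) w r²/(2P)` (`r = |z|`, `δ` small). With `ν(s) = 2γs` the right-hand side of the
equation for `μ̄` absorbs the negative terms: the `β`-term through `ε μ̄ + β`, and
`γ r |log r|^λ` in three regimes. For `r ≤ 1` it is at most `γ` and `ν' = 2γ` pays for it; for
`1 < r ≤ P^(1+ε)` AM-GM against the diffusion term costs `γ²(1+ε)^(2λ+2) L^(λ+1/2) P/((2λ+1) μ̄)`;
for `r > P^(1+ε)` the bound `(log r)^λ ≤ C r^θ` lets the diffusion term dominate on its own.
Since `μ̄` is increasing, `ε ≤ μ̄ ≤ max μ̄` on `[0, T]`, so a single `k` makes all the smallness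
conditions on `P ≥ k` hold.
-/

open Real Set Filter Topology

lemma mul_abs_log_rpow_le_one {r lam : ℝ} (hr0 : 0 ≤ r) (hr1 : r ≤ 1) (hlam0 : 0 ≤ lam)
    (hlam1 : lam ≤ 1) : r * |log r| ^ lam ≤ 1 := by
  rcases hr0.eq_or_lt with rfl | hr0
  · simp
  rcases le_total |log r| 1 with h | h
  · exact mul_le_one₀ hr1 (by positivity) (rpow_le_one (abs_nonneg _) h hlam0)
  · calc r * |log r| ^ lam ≤ r * |log r| := by
          gcongr; simpa using rpow_le_rpow_of_exponent_le h hlam1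
      _ = |log r * r| := by rw [abs_mul, abs_of_pos hr0, mul_comm]
      _ ≤ 1 := (abs_log_mul_self_lt r hr0 hr1).le

lemma rpow_log_le_rpow_div {r lam θ : ℝ} (hr : 1 ≤ r) (hlam : 0 < lam) (hθ : 0 < θ) :
    log r ^ lam ≤ r ^ θ / (θ / lam) ^ lam := by
  have hr0 : 0 ≤ r := by linarith
  calc log r ^ lam ≤ (r ^ (θ / lam) / (θ / lam)) ^ lam :=
        rpow_le_rpow (log_nonneg hr) (log_le_rpow_div hr0 (by positivity)) hlam.le
    _ = r ^ θ / (θ / lam) ^ lam := by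
        rw [div_rpow (by positivity) (by positivity), ← rpow_mul hr0, div_mul_cancel₀ _ hlam.ne']

lemma sq_one_add_le_one_sub_mul_sq {δ ε : ℝ} (hδ0 : 0 ≤ δ) (hδ1 : δ ≤ 1 / 8) (hδε : 8 * δ ≤ ε) :
    (1 + δ) ^ 2 ≤ (1 - δ) * (1 + ε) ^ 2 := by
  calc (1 + δ) ^ 2 ≤ (1 - δ) * (1 + 8 * δ) ^ 2 := by
        nlinarith [mul_nonneg (mul_nonneg hδ0 hδ0) (by linarith : (0:ℝ) ≤ 1 / 8 - δ)]
    _ ≤ (1 - δ) * (1 + ε) ^ 2 := by gcongr; linarith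

lemma mul_le_half_mul_sq_add_sq_div {b q r : ℝ} (hb : 0 < b) :
    q * r ≤ b / 2 * r ^ 2 + q ^ 2 / (2 * b) := by
  have h : 0 ≤ (b * r - q) ^ 2 / (2 * b) := by positivity
  have e : (b * r - q) ^ 2 / (2 * b) = b / 2 * r ^ 2 + q ^ 2 / (2 * b) - q * r := by
    field_simp; ring
  linarith

lemma eventually_mul_log_le_rpow {C η : ℝ} (hη : 0 < η) :
    ∀ᶠ P in atTop, C * log P ≤ P ^ η := by
  filter_upwards [((isLittleO_log_rpow_atTop hη).const_mul_left C).bound one_pos,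
    eventually_ge_atTop 0] with P h hP
  rw [one_mul, norm_of_nonneg (rpow_nonneg hP η)] at h
  exact (le_abs_self _).trans h

/-- `logSlope a c P = P · d/dP (c · (log P) ^ a)`. -/
noncomputable def logSlope (a c P : ℝ) : ℝ := c * a * log P ^ a / log P

lemma tendsto_logSlope_atTop {a : ℝ} (c : ℝ) (ha : a < 1) :
    Tendsto (logSlope a c) atTop (𝓝 0) := by
  have h : Tendsto (fun L => c * a * L ^ (a - 1)) atTop (𝓝 0) := by
    simpa using (tendsto_rpow_neg_atTop (by linarith : 0 < 1 - a)).const_mul (c * a)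
  refine (h.comp tendsto_log_atTop).congr' ?_
  filter_upwards [tendsto_log_atTop.eventually_gt_atTop 0] with P hP
  simp [logSlope, rpow_sub_one hP.ne', mul_div_assoc]

lemma hasDerivAt_log_rpow {a P : ℝ} (hP : 0 < P) (hL : log P ≠ 0) :
    HasDerivAt (fun u => log u ^ a) (a * (log P ^ a / log P) / P) P :=
  ((hasDerivAt_log hP.ne').rpow_const (Or.inl hL)).congr_deriv (by rw [rpow_sub_one hL]; field_simp)

lemma hasDerivAt_mul_exp_log_rpow {a c n P : ℝ} (hP : 0 < P) (hL : log P ≠ 0) :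
    HasDerivAt (fun u => u * exp (c * log u ^ a + n))
      (exp (c * log P ^ a + n) * (1 + logSlope a c P)) P :=
  ((hasDerivAt_id' P).mul (((hasDerivAt_log_rpow hP hL).const_mul c).add_const n).exp).congr_deriv
    (by simp only [logSlope]; field_simp)

lemma hasDerivAt_exp_log_rpow_mul {a c n P : ℝ} (hP : 0 < P) (hL : log P ≠ 0) :
    HasDerivAt (fun u => exp (c * log u ^ a + n) * (1 + logSlope a c u))
      (exp (c * log P ^ a + n) *
        (logSlope a c P * (1 + logSlope a c P + (a - 1) / log P)) / P) P := by
  have hE := (((hasDerivAt_log_rpow (a := a) hP hL).const_mul c).add_const n).exp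
  have hS := (((hasDerivAt_log_rpow (a := a) hP hL).const_mul (c * a)).div
    (hasDerivAt_log hP.ne') hL).const_add 1
  refine (hE.mul hS).congr_deriv ?_
  simp only [logSlope, Pi.div_apply]
  field_simp

lemma drift_bound {a β η w P x : ℝ} (ha : 0 ≤ a) (hβ : 0 ≤ β) (hw : 0 ≤ w) (hη : 0 ≤ η)
    (hwβ : w * β ≤ η) (hP : 1 ≤ P) (hx : x ≤ P) :
    (1 + w) * (if 1 < x then β * x * log x ^ a else 0) ≤ P * (β + η) * log P ^ a := by
  have hL : 0 ≤ log P ^ a := rpow_nonneg (log_nonneg hP) a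
  split_ifs with hx1
  · have hlog : log x ^ a ≤ log P ^ a :=
      rpow_le_rpow (log_nonneg hx1.le) (log_le_log (by linarith) hx) ha
    have : 0 ≤ log x ^ a := rpow_nonneg (log_nonneg hx1.le) a
    calc (1 + w) * (β * x * log x ^ a) ≤ (1 + w) * (β * P * log P ^ a) := by
          gcongr
      _ = P * (β + w * β) * log P ^ a := by ring
      _ ≤ P * (β + η) * log P ^ a := by gcongr
  · rw [mul_zero]
    have : 0 ≤ β + η := by linarith
    positivity

lemma diffusion_bound_of_log_le {lam ε γ c δ P r : ℝ} (hlam : 0 < lam) (hε : 0 < ε)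
    (hγ : 0 < γ) (hc : 0 < c) (hP : 0 < P) (hL : 0 < log P) (hδ0 : 0 ≤ δ) (hδ1 : δ ≤ 1 / 8)
    (hδε : 8 * δ ≤ ε) (hw : logSlope (lam + 1 / 2) c P ≤ δ) (hr : 1 < r)
    (hrP : log r ≤ (1 + ε) * log P) :
    (1 + logSlope (lam + 1 / 2) c P) * (γ * (r * log r ^ lam))
      ≤ (1 - δ) * logSlope (lam + 1 / 2) c P / P / 2 * r ^ 2
        + P * (γ ^ 2 * (1 + ε) ^ (2 * lam + 2) / ((2 * lam + 1) * c) * log P ^ (lam + 1 / 2)) := by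
  set w := logSlope (lam + 1 / 2) c P with hw_def
  have hw0 : 0 < w := by rw [hw_def, logSlope]; positivity
  have hb : 0 < (1 - δ) * w / P := by
    have : 0 < 1 - δ := by linarith
    positivity
  have hlogr : log r ^ lam ≤ (1 + ε) ^ lam * log P ^ lam := by
    rw [← mul_rpow (by linarith) hL.le]
    exact rpow_le_rpow (log_nonneg hr.le) hrP hlam.le
  set q := (1 + δ) * γ * ((1 + ε) ^ lam * log P ^ lam)
  have hpowε : (1 + ε) ^ (2 * lam + 2) = ((1 + ε) ^ lam) ^ 2 * (1 + ε) ^ 2 := by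
    rw [show 2 * lam + 2 = lam + lam + 2 by ring, rpow_add (by linarith), rpow_add (by linarith),
      rpow_two]
    ring
  have hpowL : (log P ^ (lam + 1 / 2)) ^ 2 = (log P ^ lam) ^ 2 * log P := by
    rw [sq, ← rpow_add hL, show lam + 1 / 2 + (lam + 1 / 2) = lam + lam + 1 by ring,
      rpow_add hL, rpow_add hL, rpow_one]
    ring
  have hcoef : P * (γ ^ 2 * (1 + ε) ^ (2 * lam + 2) / ((2 * lam + 1) * c) * log P ^ (lam + 1 / 2))
      * (2 * ((1 - δ) * w / P))
      = (1 - δ) * (1 + ε) ^ 2 * (γ ^ 2 * ((1 + ε) ^ lam) ^ 2 * (log P ^ lam) ^ 2) := by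
    rw [hw_def, logSlope, hpowε]
    field_simp
    rw [show (2 * lam + 1) / 2 = lam + 1 / 2 by ring, hpowL]
    ring
  calc (1 + w) * (γ * (r * log r ^ lam))
        ≤ (1 + δ) * (γ * (r * ((1 + ε) ^ lam * log P ^ lam))) := by
        have : 0 ≤ log r ^ lam := rpow_nonneg (log_nonneg hr.le) _
        gcongr
    _ = q * r := by ring
    _ ≤ (1 - δ) * w / P / 2 * r ^ 2 + q ^ 2 / (2 * ((1 - δ) * w / P)) :=
        mul_le_half_mul_sq_add_sq_div hb
    _ ≤ _ := by
        gcongr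
        rw [div_le_iff₀ (by positivity), hcoef]
        calc q ^ 2 = (1 + δ) ^ 2 * (γ ^ 2 * ((1 + ε) ^ lam) ^ 2 * (log P ^ lam) ^ 2) := by ring
          _ ≤ _ := by gcongr; exact sq_one_add_le_one_sub_mul_sq hδ0 hδ1 hδε

lemma diffusion_bound_of_le_rpow {lam θ γ w b ρ r : ℝ} (hlam : 0 < lam) (hθ : 0 < θ)
    (hγ : 0 ≤ γ) (hw1 : w ≤ 1) (hb : 0 ≤ b) (hr : 1 ≤ r) (hρ : ρ ≤ r ^ (1 - θ))
    (hK : 4 * γ ≤ (θ / lam) ^ lam * b * ρ) :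
    (1 + w) * (γ * (r * log r ^ lam)) ≤ b / 2 * r ^ 2 := by
  have hτ : 0 < (θ / lam) ^ lam := by positivity
  have hr0 : 0 < r := by linarith
  calc (1 + w) * (γ * (r * log r ^ lam)) ≤ 2 * (γ * (r * (r ^ θ / (θ / lam) ^ lam))) := by
        have : 0 ≤ log r ^ lam := rpow_nonneg (log_nonneg hr) _
        gcongr
        · linarith
        · exact rpow_log_le_rpow_div hr hlam hθ
    _ = 4 * γ / (θ / lam) ^ lam * (r * r ^ θ) / 2 := by ring
    _ ≤ b * ρ * (r * r ^ θ) / 2 := by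
        gcongr
        rw [div_le_iff₀ hτ]
        linarith
    _ ≤ b * r ^ (1 - θ) * (r * r ^ θ) / 2 := by gcongr
    _ = b / 2 * r ^ 2 := by
        rw [mul_assoc b, mul_comm (r ^ (1 - θ)), mul_assoc r, ← rpow_add hr0,
          add_sub_cancel, rpow_one]
        ring

-- The exponent is chosen so that `(1 + ε) * (1 - ε / (2 * (1 + ε))) = 1 + ε / 2`.
lemma rpow_one_add_half_le_rpow {P r ε : ℝ} (hP : 0 < P) (hr : 0 < r) (hε : 0 ≤ ε)
    (hrP : (1 + ε) * log P ≤ log r) : P ^ (1 + ε / 2) ≤ r ^ (1 - ε / (2 * (1 + ε))) := by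
  rw [rpow_def_of_pos hP, rpow_def_of_pos hr, exp_le_exp,
    show 1 - ε / (2 * (1 + ε)) = (1 + ε / 2) / (1 + ε) by field_simp; ring,
    mul_div_assoc', le_div_iff₀ (by linarith)]
  nlinarith

lemma diffusion_bound {lam ε γ c δ P r : ℝ} (hlam : 0 < lam) (hlam' : lam ≤ 1) (hε : 0 < ε)
    (hγ : 0 < γ) (hc : 0 < c) (hP : 1 < P) (hδ0 : 0 ≤ δ) (hδ1 : δ ≤ 1 / 8) (hδε : 8 * δ ≤ ε)
    (hw : logSlope (lam + 1 / 2) c P ≤ δ)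
    (hK : 4 * γ ≤ (ε / (2 * (1 + ε)) / lam) ^ lam * ((1 - δ) * logSlope (lam + 1 / 2) c P)
      * P ^ (ε / 2)) (hr : 0 ≤ r) :
    (1 + logSlope (lam + 1 / 2) c P) * (γ * (r * |log r| ^ lam))
      ≤ (1 - δ) * logSlope (lam + 1 / 2) c P / P / 2 * r ^ 2
        + P * (γ ^ 2 * (1 + ε) ^ (2 * lam + 2) / ((2 * lam + 1) * c) * log P ^ (lam + 1 / 2))
        + 2 * γ * P := by
  set w := logSlope (lam + 1 / 2) c P with hw_def
  have hP0 : 0 < P := by linarith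
  have hL : 0 < log P := log_pos hP
  have hw0 : 0 ≤ w := by rw [hw_def, logSlope]; positivity
  have hb : 0 ≤ (1 - δ) * w / P := by
    have : 0 ≤ 1 - δ := by linarith
    positivity
  have hT : 0 ≤ P * (γ ^ 2 * (1 + ε) ^ (2 * lam + 2) / ((2 * lam + 1) * c)
      * log P ^ (lam + 1 / 2)) := by
    positivity
  rcases le_or_gt r 1 with hr1 | hr1
  · have hsmall := mul_abs_log_rpow_le_one hr hr1 hlam.le hlam'
    have : 0 ≤ r * |log r| ^ lam := by positivity
    have hB : 0 ≤ (1 - δ) * w / P / 2 * r ^ 2 := by positivity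
    calc (1 + w) * (γ * (r * |log r| ^ lam)) ≤ 2 * (γ * 1) := by gcongr; linarith
      _ ≤ 2 * γ * P := by nlinarith
      _ ≤ _ := by linarith
  rw [abs_of_pos (log_pos hr1)]
  rcases le_or_gt (log r) ((1 + ε) * log P) with hmid | hlarge
  · have h := diffusion_bound_of_log_le hlam hε hγ hc hP0 hL hδ0 hδ1 hδε hw hr1 hmid
    rw [← hw_def] at h
    have : 0 ≤ 2 * γ * P := by positivity
    linarith
  · set θ := ε / (2 * (1 + ε))
    have hρ := rpow_one_add_half_le_rpow hP0 (by linarith) hε.le hlarge.le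
    have hK' : 4 * γ ≤ (θ / lam) ^ lam * ((1 - δ) * w / P) * P ^ (1 + ε / 2) := by
      rw [rpow_add hP0, rpow_one]
      convert hK using 1
      field_simp
    have h := diffusion_bound_of_le_rpow hlam (by positivity) hγ.le (show w ≤ 1 by linarith) hb
      hr1.le hρ hK'
    have : 0 ≤ 2 * γ * P := by positivity
    linarith

noncomputable def ivpRate (lam β γ ε c : ℝ) : ℝ :=
  ε * c + γ ^ 2 * (1 + ε) ^ (2 * lam + 2) / ((2 * lam + 1) * c) + ε + β

lemma ivpRate_pos {lam β γ ε c : ℝ} (hlam : 0 < lam) (hβ : 0 ≤ β) (hε : 0 < ε) (hc : 0 < c) :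
    0 < ivpRate lam β γ ε c := by
  unfold ivpRate
  positivity

lemma continuousOn_ivpRate_comp {lam β γ ε : ℝ} {μ : ℝ → ℝ} {I : Set ℝ} (hlam : 0 < lam)
    (hμ : ContinuousOn μ I) (hμpos : ∀ s ∈ I, 0 < μ s) :
    ContinuousOn (fun s => ivpRate lam β γ ε (μ s)) I := by
  have : ∀ s ∈ I, (2 * lam + 1) * μ s ≠ 0 := fun s hs => by
    have := hμpos s hs
    positivity
  unfold ivpRate
  fun_prop (disch := assumption)

lemma exists_forall_mem_Icc_of_hasDerivWithinAt_ivpRate {lam β γ ε T : ℝ} {μ : ℝ → ℝ}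
    (hlam : 0 < lam) (hβ : 0 ≤ β) (hε : 0 < ε) (hμpos : ∀ s ∈ Icc 0 T, 0 < μ s)
    (hμ : ∀ s ∈ Icc 0 T, HasDerivWithinAt μ (ivpRate lam β γ ε (μ s)) (Icc 0 T) s) :
    ∃ M, ∀ s ∈ Icc 0 T, μ s ∈ Icc (μ 0) M := by
  have hμc : ContinuousOn μ (Icc 0 T) := fun s hs => (hμ s hs).continuousWithinAt
  have hmono : MonotoneOn μ (Icc 0 T) :=
    monotoneOn_of_hasDerivWithinAt_nonneg (convex_Icc 0 T) hμc
      (fun s hs => (hμ s (interior_subset hs)).mono interior_subset)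
      (fun s hs => (ivpRate_pos hlam hβ hε (hμpos s (interior_subset hs))).le)
  obtain ⟨M, hM⟩ := isCompact_Icc.exists_bound_of_continuousOn hμc
  exact ⟨M, fun s hs =>
    ⟨hmono ⟨le_rfl, hs.1.trans hs.2⟩ hs hs.1, (le_abs_self _).trans (hM s hs)⟩⟩

/-- The left-hand side of the inequality divided by `exp (μ̄ s · (log P) ^ (λ + 1/2) + ν s)`,
at `c = μ̄ s`, `P = x + k`, `r = ‖z‖` and `ν' = 2γ` (see `generator_phi_eq_exp_mul`). -/
noncomputable def reducedGenerator (lam β γ ε c P x r : ℝ) : ℝ :=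
  -(1 + logSlope (lam + 1 / 2) c P) *
      ((if 1 < x then β * x * log x ^ (lam + 1 / 2) else 0) + γ * (r * |log r| ^ lam))
    + 1 / 2 * (logSlope (lam + 1 / 2) c P *
        (1 + logSlope (lam + 1 / 2) c P + (lam + 1 / 2 - 1) / log P) / P) * r ^ 2
    + P * (ivpRate lam β γ ε c * log P ^ (lam + 1 / 2) + 2 * γ)

lemma reducedGenerator_nonneg {lam β γ ε c δ P x r : ℝ} (hlam : 0 < lam) (hlam' : lam < 1 / 2)
    (hε : 0 < ε) (hγ : 0 < γ) (hβ : 0 ≤ β) (hc : 0 < c) (hP : 1 < P) (hL : 1 ≤ log P)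
    (hδ0 : 0 ≤ δ) (hδ1 : δ ≤ 1 / 8) (hδε : 8 * δ ≤ ε)
    (hw : logSlope (lam + 1 / 2) c P ≤ δ) (hwβ : logSlope (lam + 1 / 2) β P ≤ ε)
    (hcurv : 1 / 2 - lam ≤ δ * log P)
    (hlarge : 8 * γ * log P ≤ (ε / (2 * (1 + ε)) / lam) ^ lam * c * (lam + 1 / 2) * P ^ (ε / 2))
    (hxP : x ≤ P) (hr : 0 ≤ r) :
    0 ≤ reducedGenerator lam β γ ε c P x r := by
  have hL0 : 0 < log P := by linarith
  have hA : 1 ≤ log P ^ (lam + 1 / 2) := one_le_rpow hL (by linarith)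
  have hw0 : 0 ≤ logSlope (lam + 1 / 2) c P := by rw [logSlope]; positivity
  have hwβ' : logSlope (lam + 1 / 2) c P * β ≤ ε * c :=
    calc logSlope (lam + 1 / 2) c P * β = c * logSlope (lam + 1 / 2) β P := by
          simp only [logSlope]; ring
      _ ≤ ε * c := by rw [mul_comm ε]; gcongr
  have hdrift :=
    drift_bound (a := lam + 1 / 2) (x := x) (by linarith) hβ hw0 (by positivity) hwβ' hP.le hxP
  have hcurvature : (1 - δ) * logSlope (lam + 1 / 2) c P ≤ logSlope (lam + 1 / 2) c P *
      (1 + logSlope (lam + 1 / 2) c P + (lam + 1 / 2 - 1) / log P) := by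
    have : -δ ≤ (lam + 1 / 2 - 1) / log P := by
      rw [le_div_iff₀ hL0]; linarith
    nlinarith
  have hK : 4 * γ ≤ (ε / (2 * (1 + ε)) / lam) ^ lam * ((1 - δ) * logSlope (lam + 1 / 2) c P)
      * P ^ (ε / 2) := by
    calc 4 * γ = 8 * γ * log P / (2 * log P) := by field_simp; ring
      _ ≤ (ε / (2 * (1 + ε)) / lam) ^ lam * c * (lam + 1 / 2) * P ^ (ε / 2) / (2 * log P) := by
          gcongr
      _ = (ε / (2 * (1 + ε)) / lam) ^ lam * (1 / 2 * (c * (lam + 1 / 2) * 1 / log P))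
            * P ^ (ε / 2) := by ring
      _ ≤ _ := by
          rw [logSlope]
          gcongr <;> linarith
  have hdiff := diffusion_bound hlam (by linarith) hε hγ hc hP hδ0 hδ1 hδε hw hK hr
  have hsecond_order : (1 - δ) * logSlope (lam + 1 / 2) c P / P / 2 * r ^ 2
      ≤ 1 / 2 * (logSlope (lam + 1 / 2) c P *
        (1 + logSlope (lam + 1 / 2) c P + (lam + 1 / 2 - 1) / log P) / P) * r ^ 2 := by
    rw [show ∀ y : ℝ, y / P / 2 * r ^ 2 = 1 / 2 * (y / P) * r ^ 2 by intro y; ring]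
    gcongr
  have : 0 ≤ P * (ε * log P ^ (lam + 1 / 2)) := by positivity
  rw [reducedGenerator, ivpRate]
  linarith

lemma eventually_reducedGenerator_nonneg {lam β γ ε m M : ℝ} (hlam : 0 < lam)
    (hlam' : lam < 1 / 2) (hε : 0 < ε) (hγ : 0 < γ) (hβ : 0 ≤ β) (hm : 0 < m) :
    ∀ᶠ P in atTop, ∀ c ∈ Icc m M, ∀ x ≤ P, ∀ r, 0 ≤ r →
      0 ≤ reducedGenerator lam β γ ε c P x r := by
  have ha : lam + 1 / 2 < 1 := by linarith
  have hδ : 0 < min ε 1 / 8 := by positivity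
  set τ := (ε / (2 * (1 + ε)) / lam) ^ lam
  have hτ : 0 < τ * m * (lam + 1 / 2) := by positivity
  filter_upwards [eventually_gt_atTop 1, tendsto_log_atTop.eventually_ge_atTop 1,
    (tendsto_logSlope_atTop M ha).eventually_le_const hδ,
    (tendsto_logSlope_atTop β ha).eventually_le_const hε,
    (tendsto_log_atTop.const_mul_atTop hδ).eventually_ge_atTop (1 / 2 - lam),
    eventually_mul_log_le_rpow (C := 8 * γ / (τ * m * (lam + 1 / 2))) (half_pos hε)]
    with P hP hL hM hβP hcurv hlarge
  intro c hc x hx r hr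
  have hL0 : 0 < log P := by linarith
  refine reducedGenerator_nonneg hlam hlam' hε hγ hβ (hm.trans_le hc.1) hP hL hδ.le
    (by linarith [min_le_right ε 1]) (by linarith [min_le_left ε 1])
    (le_trans (by unfold logSlope; gcongr; exact hc.2) hM) hβP hcurv ?_ hx hr
  rw [div_mul_eq_mul_div, div_le_iff₀ hτ] at hlarge
  calc 8 * γ * log P ≤ P ^ (ε / 2) * (τ * m * (lam + 1 / 2)) := hlarge
    _ ≤ τ * c * (lam + 1 / 2) * P ^ (ε / 2) := by rw [mul_comm]; gcongr; exact hc.1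

section TestFunction

variable (k a : ℝ) (μ ν : ℝ → ℝ)

noncomputable def phi (s x : ℝ) : ℝ := (x + k) * exp (μ s * log (x + k) ^ a + ν s)

noncomputable def phiX (s x : ℝ) : ℝ :=
  exp (μ s * log (x + k) ^ a + ν s) * (1 + logSlope a (μ s) (x + k))

noncomputable def phiXX (s x : ℝ) : ℝ :=
  exp (μ s * log (x + k) ^ a + ν s) *
    (logSlope a (μ s) (x + k) * (1 + logSlope a (μ s) (x + k) + (a - 1) / log (x + k))) / (x + k)

noncomputable def phiS (μ' ν' : ℝ → ℝ) (s x : ℝ) : ℝ :=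
  phi k a μ ν s x * (μ' s * log (x + k) ^ a + ν' s)

variable {k a μ ν}

lemma hasDerivWithinAt_phi_time {I : Set ℝ} {μ' ν' : ℝ → ℝ} {s : ℝ} (x : ℝ)
    (hμ : HasDerivWithinAt μ (μ' s) I s) (hν : HasDerivWithinAt ν (ν' s) I s) :
    HasDerivWithinAt (fun t => phi k a μ ν t x) (phiS k a μ ν μ' ν' s x) I s :=
  (((hμ.mul_const _).add hν).exp.const_mul (x + k)).congr_deriv
    (by simp only [phiS, phi, Pi.add_apply]; ring)

lemma hasDerivAt_phi_space (s : ℝ) {x : ℝ} (hx : 1 < x + k) :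
    HasDerivAt (fun u => phi k a μ ν s u) (phiX k a μ ν s x) x :=
  (hasDerivAt_mul_exp_log_rpow (by linarith) (log_pos hx).ne').comp_add_const x k

lemma hasDerivAt_phiX_space (s : ℝ) {x : ℝ} (hx : 1 < x + k) :
    HasDerivAt (fun u => phiX k a μ ν s u) (phiXX k a μ ν s x) x :=
  (hasDerivAt_exp_log_rpow_mul (by linarith) (log_pos hx).ne').comp_add_const x k

lemma generator_phi_eq_exp_mul (lam β γ ε : ℝ) (s x r : ℝ) :
    -phiX k (lam + 1 / 2) μ ν s x *
        ((if 1 < x then β * x * log x ^ (lam + 1 / 2) else 0) + γ * (r * |log r| ^ lam))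
      + 1 / 2 * phiXX k (lam + 1 / 2) μ ν s x * r ^ 2
      + phiS k (lam + 1 / 2) μ ν (fun t => ivpRate lam β γ ε (μ t)) (fun _ => 2 * γ) s x
    = exp (μ s * log (x + k) ^ (lam + 1 / 2) + ν s) *
        reducedGenerator lam β γ ε (μ s) (x + k) x r := by
  simp only [phiX, phiXX, phiS, phi, reducedGenerator]
  ring

variable {I : Set ℝ}

lemma add_ne_zero_of_mem_prod (hk : 1 < k) : ∀ p ∈ I ×ˢ Ici (0 : ℝ), p.2 + k ≠ 0 :=
  fun p hp => (show 0 < p.2 + k by linarith [hp.2.out]).ne'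

lemma log_add_ne_zero_of_mem_prod (hk : 1 < k) : ∀ p ∈ I ×ˢ Ici (0 : ℝ), log (p.2 + k) ≠ 0 :=
  fun p hp => (log_pos (show 1 < p.2 + k by linarith [hp.2.out])).ne'

variable (hk : 1 < k) (ha : 0 ≤ a) (hμ : ContinuousOn μ I) (hν : ContinuousOn ν I)
include hk ha hμ hν

lemma continuousOn_phi : ContinuousOn (fun p : ℝ × ℝ => phi k a μ ν p.1 p.2) (I ×ˢ Ici 0) := by
  unfold phi
  fun_prop (disch := first
    | assumption
    | exact mapsTo_fst_prod
    | exact add_ne_zero_of_mem_prod hk)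

lemma continuousOn_phiX : ContinuousOn (fun p : ℝ × ℝ => phiX k a μ ν p.1 p.2) (I ×ˢ Ici 0) := by
  unfold phiX logSlope
  fun_prop (disch := first
    | assumption
    | exact mapsTo_fst_prod
    | exact add_ne_zero_of_mem_prod hk
    | exact log_add_ne_zero_of_mem_prod hk)

lemma continuousOn_phiXX : ContinuousOn (fun p : ℝ × ℝ => phiXX k a μ ν p.1 p.2) (I ×ˢ Ici 0) := by
  unfold phiXX logSlope
  fun_prop (disch := first
    | assumption
    | exact mapsTo_fst_prod
    | exact add_ne_zero_of_mem_prod hk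
    | exact log_add_ne_zero_of_mem_prod hk)

lemma continuousOn_phiS {μ' ν' : ℝ → ℝ} (hμ' : ContinuousOn μ' I) (hν' : ContinuousOn ν' I) :
    ContinuousOn (fun p : ℝ × ℝ => phiS k a μ ν μ' ν' p.1 p.2) (I ×ˢ Ici 0) := by
  unfold phiS phi
  fun_prop (disch := first
    | assumption
    | exact mapsTo_fst_prod
    | exact add_ne_zero_of_mem_prod hk)

end TestFunction

open Classical in
theorem stmt_11_general (lam β γ ε T : ℝ) (d : ℕ)
    (hlam : lam ∈ Set.Ioo (0 : ℝ) (1 / 2)) (hβ : 0 ≤ β) (hγ : 0 < γ) (hε : 0 < ε)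
    (μ : ℝ → ℝ) (hμ0 : μ 0 = ε) (hμpos : ∀ s ∈ Set.Icc 0 T, 0 < μ s)
    (hμderiv : ∀ s ∈ Set.Icc 0 T,
      HasDerivWithinAt μ
        (ε * μ s + γ ^ 2 * (1 + ε) ^ (2 * lam + 2) / ((2 * lam + 1) * μ s) + ε + β)
        (Set.Icc 0 T) s) :
    ∃ k : ℝ, Real.exp 1 ≤ k ∧
    ∃ ν ν' : ℝ → ℝ, ν 0 = 0 ∧ (∀ s ∈ Set.Icc 0 T, 0 ≤ ν s) ∧
      MonotoneOn ν (Set.Icc 0 T) ∧ ContinuousOn ν' (Set.Icc 0 T) ∧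
      (∀ s ∈ Set.Icc 0 T, HasDerivWithinAt ν (ν' s) (Set.Icc 0 T) s) ∧
    ∃ φ φs φx φxx : ℝ → ℝ → ℝ,
      (∀ s x, φ s x =
        (x + k) * Real.exp (μ s * Real.log (x + k) ^ (lam + 1 / 2) + ν s)) ∧
      (∀ s ∈ Set.Icc 0 T, ∀ x ∈ Set.Ici (0 : ℝ),
        HasDerivWithinAt (fun t => φ t x) (φs s x) (Set.Icc 0 T) s ∧
        HasDerivWithinAt (fun u => φ s u) (φx s x) (Set.Ici 0) x ∧
        HasDerivWithinAt (fun u => φx s u) (φxx s x) (Set.Ici 0) x) ∧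
      ContinuousOn (fun p : ℝ × ℝ => φ p.1 p.2) (Set.Icc 0 T ×ˢ Set.Ici 0) ∧
      ContinuousOn (fun p : ℝ × ℝ => φs p.1 p.2) (Set.Icc 0 T ×ˢ Set.Ici 0) ∧
      ContinuousOn (fun p : ℝ × ℝ => φx p.1 p.2) (Set.Icc 0 T ×ˢ Set.Ici 0) ∧
      ContinuousOn (fun p : ℝ × ℝ => φxx p.1 p.2) (Set.Icc 0 T ×ˢ Set.Ici 0) ∧
      ∀ s ∈ Set.Icc 0 T, ∀ x ∈ Set.Ici (0 : ℝ), ∀ z : EuclideanSpace ℝ (Fin d),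
        0 ≤ -φx s x * ((if 1 < x then β * x * Real.log x ^ (lam + 1 / 2) else 0)
              + γ * (if z = 0 then 0 else ‖z‖ * |Real.log ‖z‖| ^ lam))
            + 1 / 2 * φxx s x * ‖z‖ ^ 2 + φs s x := by
  obtain ⟨hlam0, hlam1⟩ := hlam
  have hμc : ContinuousOn μ (Icc 0 T) := fun s hs => (hμderiv s hs).continuousWithinAt
  obtain ⟨M, hμ_mem⟩ :=
    exists_forall_mem_Icc_of_hasDerivWithinAt_ivpRate hlam0 hβ hε hμpos hμderiv
  obtain ⟨k₀, hk₀⟩ := eventually_atTop.1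
    (eventually_reducedGenerator_nonneg (M := M) hlam0 hlam1 hε hγ hβ hε)
  set k := max k₀ (exp 1)
  have hk : 1 < k := (one_lt_exp_iff.2 one_pos).trans_le (le_max_right _ _)
  have ha : 0 ≤ lam + 1 / 2 := by linarith
  have hν : ∀ s, HasDerivWithinAt (fun t => 2 * γ * t) (2 * γ) (Icc 0 T) s := fun s =>
    ((hasDerivWithinAt_id s _).const_mul _).congr_deriv (mul_one _)
  refine ⟨k, le_max_right _ _, fun s => 2 * γ * s, fun _ => 2 * γ, mul_zero _,
    fun s hs => mul_nonneg (by positivity) hs.1,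
    fun s _ t _ hst => mul_le_mul_of_nonneg_left hst (by positivity), continuousOn_const,
    fun s _ => hν s, _, _, _, _, fun _ _ => rfl,
    fun s hs x hx => ⟨hasDerivWithinAt_phi_time x (hμderiv s hs) (hν s),
      (hasDerivAt_phi_space s (by linarith [hx.out])).hasDerivWithinAt,
      (hasDerivAt_phiX_space s (by linarith [hx.out])).hasDerivWithinAt⟩,
    continuousOn_phi hk ha hμc (by fun_prop),
    continuousOn_phiS hk ha hμc (by fun_prop) (continuousOn_ivpRate_comp hlam0 hμc hμpos)
      continuousOn_const,
    continuousOn_phiX hk ha hμc (by fun_prop), continuousOn_phiXX hk ha hμc (by fun_prop), ?_⟩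
  intro s hs x hx z
  have hz : (if z = 0 then 0 else ‖z‖ * |log ‖z‖| ^ lam) = ‖z‖ * |log ‖z‖| ^ lam := by
    split_ifs with h <;> simp [h]
  rw [hz, generator_phi_eq_exp_mul]
  exact mul_nonneg (exp_pos _).le (hk₀ (x + k) (by linarith [hx.out, le_max_left k₀ (exp 1)])
    (μ s) (hμ0 ▸ hμ_mem s hs) x (by linarith [hx.out]) ‖z‖ (norm_nonneg z))

open Classical in
/-- Proposition 4.2: for `λ ∈ (0, 1/2)`, `β ≥ 0`, `γ > 0`, `ε > 0`, `T > 0` and `μ̄` the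
solution of the IVP `μ̄(0) = ε`, `μ̄′ = ε·μ̄ + γ²(1+ε)^{2λ+2}/((2λ+1)·μ̄) + ε + β`, there
exist a constant `k ≥ e` and a nondecreasing `C¹` function `ν ≥ 0` with `ν(0) = 0`, such
that `φ(s,x) := (x+k)·exp(μ̄(s)·(ln(x+k))^{λ+1/2} + ν(s))` is `C^{1,2}` on `[0,T]×[0,∞)`
and satisfies `−∂ₓφ·(β·x·(ln x)^{λ+1/2}·𝟙_{x>1} + γ·|z|·|ln|z||^λ) + (1/2)·∂ₓₓφ·|z|²
+ ∂ₛφ ≥ 0` (the map `z ↦ |z|·|ln|z||^λ` being extended by `0` at `z = 0`). -/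
theorem stmt_11 (lam β γ ε T : ℝ) (d : ℕ) (hd : 1 ≤ d)
    (hlam : lam ∈ Set.Ioo (0 : ℝ) (1 / 2)) (hβ : 0 ≤ β) (hγ : 0 < γ) (hε : 0 < ε)
    (hT : 0 < T)
    (μ : ℝ → ℝ) (hμ0 : μ 0 = ε) (hμpos : ∀ s ∈ Set.Icc 0 T, 0 < μ s)
    (hμderiv : ∀ s ∈ Set.Icc 0 T,
      HasDerivWithinAt μ
        (ε * μ s + γ ^ 2 * (1 + ε) ^ (2 * lam + 2) / ((2 * lam + 1) * μ s) + ε + β)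
        (Set.Icc 0 T) s) :
    ∃ k : ℝ, Real.exp 1 ≤ k ∧
    ∃ ν ν' : ℝ → ℝ, ν 0 = 0 ∧ (∀ s ∈ Set.Icc 0 T, 0 ≤ ν s) ∧
      MonotoneOn ν (Set.Icc 0 T) ∧ ContinuousOn ν' (Set.Icc 0 T) ∧
      (∀ s ∈ Set.Icc 0 T, HasDerivWithinAt ν (ν' s) (Set.Icc 0 T) s) ∧
    ∃ φ φs φx φxx : ℝ → ℝ → ℝ,
      (∀ s x, φ s x =
        (x + k) * Real.exp (μ s * Real.log (x + k) ^ (lam + 1 / 2) + ν s)) ∧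
      (∀ s ∈ Set.Icc 0 T, ∀ x ∈ Set.Ici (0 : ℝ),
        HasDerivWithinAt (fun t => φ t x) (φs s x) (Set.Icc 0 T) s ∧
        HasDerivWithinAt (fun u => φ s u) (φx s x) (Set.Ici 0) x ∧
        HasDerivWithinAt (fun u => φx s u) (φxx s x) (Set.Ici 0) x) ∧
      ContinuousOn (fun p : ℝ × ℝ => φ p.1 p.2) (Set.Icc 0 T ×ˢ Set.Ici 0) ∧
      ContinuousOn (fun p : ℝ × ℝ => φs p.1 p.2) (Set.Icc 0 T ×ˢ Set.Ici 0) ∧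
      ContinuousOn (fun p : ℝ × ℝ => φx p.1 p.2) (Set.Icc 0 T ×ˢ Set.Ici 0) ∧
      ContinuousOn (fun p : ℝ × ℝ => φxx p.1 p.2) (Set.Icc 0 T ×ˢ Set.Ici 0) ∧
      ∀ s ∈ Set.Icc 0 T, ∀ x ∈ Set.Ici (0 : ℝ), ∀ z : EuclideanSpace ℝ (Fin d),
        0 ≤ -φx s x * ((if 1 < x then β * x * Real.log x ^ (lam + 1 / 2) else 0)
              + γ * (if z = 0 then 0 else ‖z‖ * |Real.log ‖z‖| ^ lam))
            + 1 / 2 * φxx s x * ‖z‖ ^ 2 + φs s x :=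
  stmt_11_general lam β γ ε T d hlam hβ hγ hε μ hμ0 hμpos hμderiv
end

section
/- Let β ≥ 0, γ > 0, ε > 0, and T > 0. Let μ : [0, T] → ℝ be the unique solution of the initial value problem μ(0) = ε, μ′(s) = β·μ(s) + (γ²·(1+ε)/2)·(1 + 1/μ(s)) + β for s ∈ [0, T]. Then there exists a constant c > 0 such that, setting ν(s) := exp( c·∫₀ˢ (1 + μ(r)) dr ), the function φ(s, x) := ν(s)·(1+x)^{1+μ(s)} satisfies, for every (s, x) ∈ [0, T] × [0, ∞) and every z ∈ ℝ^d (d ≥ 1): −∂ₓφ(s, x)·( β·x·(ln x)·𝟙_{x>1} + γ·|z|·√(|ln|z||) ) + (1/2)·∂ₓₓφ(s, x)·|z|² + ∂ₛφ(s, x) ≥ 0, where the map z ↦ |z|·√(|ln|z||) is extended by the value 0 at z = 0. -/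
/-!
Dividing by `ν (1 + μ) (1 + x)^(μ - 1) > 0` and using `μ' / (1 + μ) = β + γ²(1 + ε) / (2μ)`,
the inequality splits into a drift bound `(1 + x) x ln x ≤ (1 + x)² ln (1 + x)` and a noise
bound `γ b a √|ln a| ≤ μ a² / 2 + γ²(1 + ε) / (2μ) · b² ln b + c b²` for `a = |z|`,
`b = 1 + x`, with `μ ≥ m := min μ > 0`. For `a ≤ 1` the left side is at most `γ b²`.
Otherwise, with `R` large: if `R b ≤ a^(1/(1+ε))`, then `ln a ≤ a^(2q) / (2q)` for
`q = ε / (1 + ε)` bounds the left side by `γ a² / (R √(2q)) ≤ m a² / 2`; if not,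
`ln a ≤ (1 + ε)(ln R + ln b)` and AM-GM conclude, the `ln R` term being absorbed into `c`.
-/

open Real Set

theorem hasDerivWithinAt_integral_Icc {E : Type*} [NormedAddCommGroup E] [NormedSpace ℝ E]
    [CompleteSpace E] {f : ℝ → E} {a b s : ℝ} (hf : ContinuousOn f (Icc a b))
    (hs : s ∈ Icc a b) :
    HasDerivWithinAt (fun u => ∫ r in a..u, f r) (f s) (Icc a b) s := by
  have : Fact (s ∈ Icc a b) := ⟨hs⟩
  exact intervalIntegral.integral_hasDerivWithinAt_right
    ((hf.mono (uIcc_subset_Icc (left_mem_Icc.2 (hs.1.trans hs.2)) hs)).intervalIntegrable)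
    (hf.stronglyMeasurableAtFilter_nhdsWithin measurableSet_Icc s) (hf s hs)

theorem hasDerivWithinAt_exp_mul_rpow {f g : ℝ → ℝ} {f' g' b s : ℝ} {S : Set ℝ} (hb : 0 < b)
    (hf : HasDerivWithinAt f f' S s) (hg : HasDerivWithinAt g g' S s) :
    HasDerivWithinAt (fun t => exp (f t) * b ^ g t) (exp (f s) * b ^ g s * (f' + log b * g'))
      S s :=
  (hf.exp.mul (hg.const_rpow hb)).congr_deriv (by ring)

theorem hasDerivAt_one_add_rpow {x : ℝ} (p : ℝ) (hx : 0 < 1 + x) :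
    HasDerivAt (fun u => (1 + u) ^ p) (p * (1 + x) ^ (p - 1)) x :=
  ((hasDerivAt_rpow_const (Or.inl hx.ne')).comp x ((hasDerivAt_id x).const_add 1)).congr_deriv
    (by simp)

theorem mul_sqrt_abs_log_le_one {a : ℝ} (h0 : 0 ≤ a) (h1 : a ≤ 1) : a * √|log a| ≤ 1 := by
  rcases h0.eq_or_lt with rfl | h0
  · simp
  have hlog : |log a * a| ≤ 1 := (abs_log_mul_self_lt a h0 h1).le
  calc a * √|log a| = √(a * |log a * a|) := by
        rw [abs_mul, abs_of_pos h0, ← sqrt_sq h0.le, ← sqrt_mul (sq_nonneg a), sqrt_sq h0.le]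
        ring_nf
    _ ≤ √(1 * 1) := sqrt_le_sqrt (mul_le_mul h1 hlog (abs_nonneg _) zero_le_one)
    _ = 1 := by simp

theorem mul_le_half_mul_sq_add_sq_div_s13 {M : ℝ} (hM : 0 < M) (x y : ℝ) :
    x * y ≤ M / 2 * x ^ 2 + y ^ 2 / (2 * M) := by
  have key : M / 2 * x ^ 2 + y ^ 2 / (2 * M) - x * y = (M * x - y) ^ 2 / (2 * M) := by
    field_simp
    ring
  have : 0 ≤ (M * x - y) ^ 2 / (2 * M) := by positivity
  linarith

theorem mul_sqrt_log_le_of_mul_le_rpow {a b R p q : ℝ} (ha : 1 ≤ a) (hR : 0 < R)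
    (hq : 0 < q) (hpq : p + q = 1) (hRb : R * b ≤ a ^ p) :
    b * √(log a) ≤ a / (R * √(2 * q)) := by
  have ha0 : 0 < a := by linarith
  have hsqrt : √(log a) ≤ a ^ q / √(2 * q) := by
    calc √(log a) ≤ √(a ^ (2 * q) / (2 * q)) :=
          sqrt_le_sqrt (log_le_rpow_div ha0.le (by linarith))
      _ = a ^ q / √(2 * q) := by
        rw [sqrt_div' _ (by linarith : 0 ≤ 2 * q), sqrt_eq_rpow, ← rpow_mul ha0.le]
        ring_nf
  have hbR : b ≤ a ^ p / R := by rw [le_div_iff₀ hR]; linarith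
  calc b * √(log a) ≤ a ^ p / R * (a ^ q / √(2 * q)) :=
        mul_le_mul hbR hsqrt (sqrt_nonneg _) (by positivity)
    _ = a ^ (p + q) / (R * √(2 * q)) := by rw [rpow_add ha0]; ring
    _ = a / (R * √(2 * q)) := by simp [hpq]

theorem mul_sqrt_log_le_of_log_le {M a b γ K : ℝ} (hM : 0 < M) (ha : 1 ≤ a) (hK : log a ≤ K) :
    b * (γ * (a * √(log a))) ≤ M / 2 * a ^ 2 + γ ^ 2 * b ^ 2 * K / (2 * M) := by
  calc b * (γ * (a * √(log a))) = a * (γ * b * √(log a)) := by ring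
    _ ≤ M / 2 * a ^ 2 + (γ * b * √(log a)) ^ 2 / (2 * M) :=
        mul_le_half_mul_sq_add_sq_div_s13 hM a _
    _ = M / 2 * a ^ 2 + γ ^ 2 * b ^ 2 * log a / (2 * M) := by
        rw [mul_pow, mul_pow, sq_sqrt (log_nonneg ha)]
    _ ≤ M / 2 * a ^ 2 + γ ^ 2 * b ^ 2 * K / (2 * M) := by gcongr

theorem exists_noise_bound {m γ ε : ℝ} (hm : 0 < m) (hγ : 0 ≤ γ) (hε : 0 < ε) :
    ∃ C > 0, ∀ M ≥ m, ∀ b ≥ 1, ∀ a ≥ 0, b * (γ * (a * √|log a|)) ≤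
      M / 2 * a ^ 2 + γ ^ 2 * (1 + ε) / 2 / M * b ^ 2 * log b + C * b ^ 2 := by
  set p := 1 / (1 + ε)
  set q := ε / (1 + ε)
  have hpq : p + q = 1 := by rw [← add_div, div_self (by positivity)]
  have hq : 0 < q := by positivity
  set R := 1 + 2 * γ / (m * √(2 * q)) with hR
  have hR1 : 1 ≤ R := le_add_of_nonneg_right (by positivity)
  have hlogR : 0 ≤ log R := log_nonneg hR1
  refine ⟨γ + 1 + γ ^ 2 * (1 + ε) / 2 / m * log R, by positivity, ?_⟩
  intro M hM b hb a ha
  have hM0 : 0 < M := hm.trans_le hM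
  have hlogb : 0 ≤ γ ^ 2 * (1 + ε) / 2 / M * b ^ 2 * log b := by
    have := log_nonneg hb
    positivity
  have hC : 0 ≤ γ ^ 2 * (1 + ε) / 2 / m * log R * b ^ 2 := by positivity
  have hCM : γ ^ 2 * (1 + ε) / 2 / M * log R ≤ γ ^ 2 * (1 + ε) / 2 / m * log R := by gcongr
  rcases le_or_gt a 1 with ha1 | ha1
  · have : b * (γ * (a * √|log a|)) ≤ γ * b ^ 2 := by
      calc b * (γ * (a * √|log a|)) ≤ b * (γ * 1) := by
            gcongr
            exact mul_sqrt_abs_log_le_one ha ha1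
        _ ≤ γ * b ^ 2 := by nlinarith [mul_le_mul_of_nonneg_left hb hγ]
    nlinarith
  rw [abs_of_pos (log_pos ha1)]
  rcases le_or_gt (R * b) (a ^ p) with hRb | hRb
  · have hγR : γ / (R * √(2 * q)) ≤ M / 2 := by
      calc γ / (R * √(2 * q)) ≤ m / 2 := by
            rw [div_le_div_iff₀ (by positivity) two_pos, hR]
            field_simp
            nlinarith [sqrt_nonneg (2 * q)]
        _ ≤ M / 2 := by linarith
    calc b * (γ * (a * √(log a))) = γ * a * (b * √(log a)) := by ring
      _ ≤ γ * a * (a / (R * √(2 * q))) := by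
          gcongr
          exact mul_sqrt_log_le_of_mul_le_rpow ha1.le (by linarith) hq hpq hRb
      _ = γ / (R * √(2 * q)) * a ^ 2 := by ring
      _ ≤ M / 2 * a ^ 2 := by gcongr
      _ ≤ _ := by nlinarith
  · have hloga : log a ≤ (1 + ε) * (log R + log b) := by
      have h := log_lt_log (by positivity) hRb
      rw [log_rpow (by linarith), log_mul (by linarith) (by linarith)] at h
      calc log a = (1 + ε) * (p * log a) := by
            rw [← mul_assoc, mul_one_div_cancel (by positivity), one_mul]
        _ ≤ (1 + ε) * (log R + log b) := by gcongr
    calc b * (γ * (a * √(log a)))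
        ≤ M / 2 * a ^ 2 + γ ^ 2 * b ^ 2 * ((1 + ε) * (log R + log b)) / (2 * M) :=
          mul_sqrt_log_le_of_log_le hM0 ha1.le hloga
      _ = M / 2 * a ^ 2 + γ ^ 2 * (1 + ε) / 2 / M * b ^ 2 * log b
          + γ ^ 2 * (1 + ε) / 2 / M * log R * b ^ 2 := by ring
      _ ≤ _ := by nlinarith

theorem one_add_mul_ite_log_le {β x : ℝ} (hβ : 0 ≤ β) (hx : 0 ≤ x) :
    (1 + x) * (if 1 < x then β * x * log x else 0) ≤ β * (1 + x) ^ 2 * log (1 + x) := by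
  have hlog : 0 ≤ log (1 + x) := log_nonneg (by linarith)
  split_ifs with hx1
  · have hlogx : log x ≤ log (1 + x) := log_le_log (by linarith) (by linarith)
    have : x * log x ≤ (1 + x) * log (1 + x) :=
      mul_le_mul (by linarith) hlogx (log_nonneg hx1.le) (by linarith)
    calc (1 + x) * (β * x * log x) = β * (1 + x) * (x * log x) := by ring
      _ ≤ β * (1 + x) * ((1 + x) * log (1 + x)) := by gcongr
      _ = β * (1 + x) ^ 2 * log (1 + x) := by ring
  · simp only [mul_zero]
    positivity

theorem neg_mul_add_half_mul_sq_add_nonneg {V M b a B G c β κ : ℝ} (hV : 0 < V) (hM : 0 < M)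
    (hb : 0 < b) (hB : b * B ≤ β * b ^ 2 * log b)
    (hG : b * G ≤ M / 2 * a ^ 2 + κ / M * b ^ 2 * log b + c * b ^ 2) :
    0 ≤ -(V * (1 + M) * b ^ M) * (B + G) + 1 / 2 * (V * (1 + M) * (M * b ^ (M - 1))) * a ^ 2
      + V * b ^ (1 + M) * (c * (1 + M) + log b * (β * M + κ * (1 + 1 / M) + β)) := by
  have hpow₁ : b ^ M = b ^ (M - 1) * b := by rw [← rpow_add_one hb.ne']; ring_nf
  have hpow₂ : b ^ (1 + M) = b ^ (M - 1) * b ^ 2 := by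
    rw [← rpow_natCast, ← rpow_add hb]; ring_nf
  have hfactor : -(V * (1 + M) * b ^ M) * (B + G)
      + 1 / 2 * (V * (1 + M) * (M * b ^ (M - 1))) * a ^ 2
      + V * b ^ (1 + M) * (c * (1 + M) + log b * (β * M + κ * (1 + 1 / M) + β))
      = V * (1 + M) * b ^ (M - 1) *
        (-(b * B) - b * G + M / 2 * a ^ 2 + b ^ 2 * (c + log b * (β + κ / M))) := by
    rw [hpow₁, hpow₂]
    field_simp
    ring
  rw [hfactor]
  refine mul_nonneg (by positivity) ?_
  have : b ^ 2 * (c + log b * (β + κ / M))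
      = β * b ^ 2 * log b + κ / M * b ^ 2 * log b + c * b ^ 2 := by ring
  linarith

open Classical in
theorem stmt_13_general (β γ ε T : ℝ) (d : ℕ)
    (hβ : 0 ≤ β) (hγ : 0 < γ) (hε : 0 < ε) (hT : 0 < T)
    (μ : ℝ → ℝ) (hμpos : ∀ s ∈ Set.Icc 0 T, 0 < μ s)
    (hμderiv : ∀ s ∈ Set.Icc 0 T,
      HasDerivWithinAt μ (β * μ s + γ ^ 2 * (1 + ε) / 2 * (1 + 1 / μ s) + β)
        (Set.Icc 0 T) s) :
    ∃ c : ℝ, 0 < c ∧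
    ∃ φ φs φx φxx : ℝ → ℝ → ℝ,
      (∀ s x, φ s x =
        Real.exp (c * ∫ r in (0 : ℝ)..s, (1 + μ r)) * (1 + x) ^ (1 + μ s)) ∧
      (∀ s ∈ Set.Icc 0 T, ∀ x ∈ Set.Ici (0 : ℝ),
        HasDerivWithinAt (fun t => φ t x) (φs s x) (Set.Icc 0 T) s ∧
        HasDerivWithinAt (fun u => φ s u) (φx s x) (Set.Ici 0) x ∧
        HasDerivWithinAt (fun u => φx s u) (φxx s x) (Set.Ici 0) x) ∧
      ∀ s ∈ Set.Icc 0 T, ∀ x ∈ Set.Ici (0 : ℝ), ∀ z : EuclideanSpace ℝ (Fin d),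
        0 ≤ -φx s x * ((if 1 < x then β * x * Real.log x else 0)
              + γ * (if z = 0 then 0 else ‖z‖ * Real.sqrt |Real.log ‖z‖|))
            + 1 / 2 * φxx s x * ‖z‖ ^ 2 + φs s x := by
  have hμcont : ContinuousOn μ (Icc 0 T) := fun s hs => (hμderiv s hs).continuousWithinAt
  obtain ⟨s₀, hs₀, hmin⟩ := isCompact_Icc.exists_isMinOn (nonempty_Icc.2 hT.le) hμcont
  obtain ⟨c, hc, hnoise⟩ := exists_noise_bound (hμpos s₀ hs₀) hγ.le hε
  set ν : ℝ → ℝ := fun s => exp (c * ∫ r in (0 : ℝ)..s, (1 + μ r))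
  set μ' : ℝ → ℝ := fun s => β * μ s + γ ^ 2 * (1 + ε) / 2 * (1 + 1 / μ s) + β
  refine ⟨c, hc, fun s x => ν s * (1 + x) ^ (1 + μ s),
    fun s x => ν s * (1 + x) ^ (1 + μ s) * (c * (1 + μ s) + log (1 + x) * μ' s),
    fun s x => ν s * (1 + μ s) * (1 + x) ^ μ s,
    fun s x => ν s * (1 + μ s) * (μ s * (1 + x) ^ (μ s - 1)), fun _ _ => rfl, ?_, ?_⟩
  · intro s hs x (hx : 0 ≤ x)
    have hx₁ : 0 < 1 + x := by linarith
    refine ⟨?_, ?_, ?_⟩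
    · exact hasDerivWithinAt_exp_mul_rpow hx₁
        ((hasDerivWithinAt_integral_Icc (continuousOn_const.add hμcont) hs).const_mul c)
        ((hμderiv s hs).const_add 1)
    · refine ((hasDerivAt_one_add_rpow (1 + μ s) hx₁).const_mul (ν s)).hasDerivWithinAt
        |>.congr_deriv ?_
      rw [add_sub_cancel_left]
      ring
    · exact ((hasDerivAt_one_add_rpow (μ s) hx₁).const_mul (ν s * (1 + μ s))).hasDerivWithinAt
  · intro s hs x (hx : 0 ≤ x) z
    have hG : (if z = 0 then 0 else ‖z‖ * √|log ‖z‖|) = ‖z‖ * √|log ‖z‖| := by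
      split_ifs with hz <;> simp [hz]
    rw [hG]
    exact neg_mul_add_half_mul_sq_add_nonneg (exp_pos _) (hμpos s hs) (by linarith)
      (one_add_mul_ite_log_le hβ hx)
      (hnoise (μ s) (hmin hs) (1 + x) (by linarith) ‖z‖ (norm_nonneg z))

open Classical in
/-- Proposition 5.2 (case `λ = 1/2`): for `β ≥ 0`, `γ > 0`, `ε > 0`, `T > 0` and `μ` the
solution of the IVP `μ(0) = ε`, `μ′ = β·μ + (γ²(1+ε)/2)·(1 + 1/μ) + β` on `[0,T]`, there
is a constant `c > 0` such that, with `ν(s) := exp(c·∫₀ˢ (1+μ(r)) dr)` and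
`φ(s,x) := ν(s)·(1+x)^{1+μ(s)}`, one has
`−∂ₓφ·(β·x·ln x·𝟙_{x>1} + γ·|z|·√(|ln|z||)) + (1/2)·∂ₓₓφ·|z|² + ∂ₛφ ≥ 0` for all
`(s,x) ∈ [0,T]×[0,∞)` and `z ∈ ℝ^d` (the map `z ↦ |z|·√(|ln|z||)` extended by `0` at
`z = 0`). -/
theorem stmt_13 (β γ ε T : ℝ) (d : ℕ) (hd : 1 ≤ d)
    (hβ : 0 ≤ β) (hγ : 0 < γ) (hε : 0 < ε) (hT : 0 < T)
    (μ : ℝ → ℝ) (hμ0 : μ 0 = ε) (hμpos : ∀ s ∈ Set.Icc 0 T, 0 < μ s)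
    (hμderiv : ∀ s ∈ Set.Icc 0 T,
      HasDerivWithinAt μ (β * μ s + γ ^ 2 * (1 + ε) / 2 * (1 + 1 / μ s) + β)
        (Set.Icc 0 T) s) :
    ∃ c : ℝ, 0 < c ∧
    ∃ φ φs φx φxx : ℝ → ℝ → ℝ,
      (∀ s x, φ s x =
        Real.exp (c * ∫ r in (0 : ℝ)..s, (1 + μ r)) * (1 + x) ^ (1 + μ s)) ∧
      (∀ s ∈ Set.Icc 0 T, ∀ x ∈ Set.Ici (0 : ℝ),
        HasDerivWithinAt (fun t => φ t x) (φs s x) (Set.Icc 0 T) s ∧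
        HasDerivWithinAt (fun u => φ s u) (φx s x) (Set.Ici 0) x ∧
        HasDerivWithinAt (fun u => φx s u) (φxx s x) (Set.Ici 0) x) ∧
      ∀ s ∈ Set.Icc 0 T, ∀ x ∈ Set.Ici (0 : ℝ), ∀ z : EuclideanSpace ℝ (Fin d),
        0 ≤ -φx s x * ((if 1 < x then β * x * Real.log x else 0)
              + γ * (if z = 0 then 0 else ‖z‖ * Real.sqrt |Real.log ‖z‖|))
            + 1 / 2 * φxx s x * ‖z‖ ^ 2 + φs s x :=
  stmt_13_general β γ ε T d hβ hγ hε hT μ hμpos hμderiv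
end

section
/- Let λ > 1/2, β ≥ 0, γ > 0, ε > 0, T > 0, and set k_λ := 2^{2·(λ−1)⁺ + 2λ − 1}, where (λ−1)⁺ := max(λ−1, 0). Let μ : [0, T] → ℝ be the unique solution of the initial value problem μ(0) = ε, μ′(s) = (γ²·(1+ε)·k_λ/2)·(1 + 1/(2λ·μ(s))) + 2βλ·μ(s) + ε for s ∈ [0, T]. Then there exist constants k ≥ e and δ > 0 (δ depending only on λ and ε), and a nondecreasing continuously differentiable function ν : [0, T] → [0, ∞) with ν(0) = 0, such that the function φ(s, x) := (x+k)·exp( μ(s)·(ln(x+k))^{2λ} + ν(s) ) is C^{1,2} on [0, T] × [0, ∞) and satisfies, for every (s, x) ∈ [0, T] × [0, ∞) and every z ∈ ℝ^d (d ≥ 1): −∂ₓφ(s, x)·( β·x·(ln x)·𝟙_{x>1} + γ·|z|·|ln|z||^λ ) + (1/2)·( ∂ₓₓφ(s, x) − δ )·|z|² + ∂ₛφ(s, x) ≥ 0, where the map z ↦ |z|·|ln|z||^λ is extended by the value 0 at z = 0. -/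
/-
Take `ν = 0` and write `ψ = ln(x+k)`, `E = exp(μψ^{2λ})`, `Q = 2λμψ^{2λ-1}`, so that
`∂ₓφ = E(1+Q)`, `∂ₓₓφ ≥ E·Q(1+Q)/(x+k)` and `∂ₛφ = (x+k)·E·μ′·ψ^{2λ}`. After dividing by `E`,
the time derivative has to absorb the two first-order terms. The drift `βx ln x ≤ β(x+k)ψ` is paid
by the `2βλμ + ε/2` part of `μ′`. For the growth term split `|z|` at `1` and at `(x+k)^Λ`, where
`Λ^{2λ} = θκ` with `κ = (1+ε)k_λ > 1` and `θ ∈ [1/2, 1)`: small `|z|` give a bounded term, paid by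
`ε/2` once `k` is large; in the middle range Young's inequality against the convexity
`θ·Q(1+Q)/(x+k)` costs exactly `(γ²κ/2)(1 + 1/Q) ≤ (γ²κ/2)(1 + 1/(2λμ))`; beyond `(x+k)^Λ` the
quadratic term wins outright. The remaining fraction `1 - θ` of the convexity, at least
`(1 - θ)·2λ·min μ` once `E ≥ x+k`, leaves room for `δ`.
-/

open Real Set Filter

lemma mul_le_mul_sq_div_two_add_sq_div {a v r : ℝ} (ha : 0 < a) :
    v * r ≤ a * r ^ 2 / 2 + v ^ 2 / (2 * a) := by
  rw [div_add_div _ _ two_ne_zero (by positivity), le_div_iff₀ (by positivity)]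
  nlinarith [sq_nonneg (a * r - v)]

lemma rpow_le_div_rpow_mul_exp {lam η t : ℝ} (hlam : 0 < lam) (hη : 0 < η) (ht : 0 ≤ t) :
    t ^ lam ≤ (lam / η) ^ lam * exp (η * t) := by
  have h : t ≤ lam / η * exp (η * t / lam) := by
    calc t = lam / η * (η * t / lam) := by field_simp
      _ ≤ lam / η * exp (η * t / lam) := by
        gcongr; linarith [add_one_le_exp (η * t / lam)]
  calc t ^ lam ≤ (lam / η * exp (η * t / lam)) ^ lam := by gcongr
    _ = (lam / η) ^ lam * exp (η * t) := by
      rw [mul_rpow (by positivity) (exp_pos _).le, ← exp_mul, div_mul_cancel₀ _ hlam.ne']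

lemma mul_abs_log_rpow_le {lam r : ℝ} (hlam : 0 < lam) (hr : 0 ≤ r) (hr1 : r ≤ 1) :
    r * |log r| ^ lam ≤ lam ^ lam := by
  obtain rfl | hr0 := hr.eq_or_lt
  · rw [zero_mul]; positivity
  have ht : 0 ≤ -log r := neg_nonneg.mpr (log_nonpos hr0.le hr1)
  have h := rpow_le_div_rpow_mul_exp hlam one_pos ht
  rw [div_one, one_mul, exp_neg, exp_log hr0] at h
  rw [abs_of_nonpos (log_nonpos hr0.le hr1)]
  calc r * (-log r) ^ lam ≤ r * (lam ^ lam * r⁻¹) := by gcongr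
    _ = lam ^ lam := by field_simp

lemma rpow_mul_log_rpow_le {lam Λ y r : ℝ} (hlam : 0 < lam) (hΛ : 1 < Λ) (hy : 1 ≤ y)
    (hr : y ^ Λ ≤ r) :
    y ^ ((Λ + 1) / 2) * log r ^ lam ≤ (2 * Λ * lam / (Λ - 1)) ^ lam * r := by
  set η := (Λ - 1) / (2 * Λ)
  have hy0 : 0 < y := by linarith
  have hr0 : 0 < r := lt_of_lt_of_le (rpow_pos_of_pos hy0 _) hr
  have hlogr : Λ * log y ≤ log r := by
    rw [← log_rpow hy0]; exact log_le_log (rpow_pos_of_pos hy0 _) hr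
  have hlogy : 0 ≤ log y := log_nonneg hy
  have hpow := rpow_le_div_rpow_mul_exp hlam (show 0 < η by positivity)
    (le_trans (by positivity) hlogr)
  have hη : lam / η = 2 * Λ * lam / (Λ - 1) := by simp only [η]; field_simp
  -- `(1 - η) Λ = (Λ + 1) / 2`, so `y ^ Λ ≤ r` gives `y ^ ((Λ + 1) / 2) ≤ r ^ (1 - η)`
  have hexp : y ^ ((Λ + 1) / 2) ≤ exp ((1 - η) * log r) := by
    rw [rpow_def_of_pos hy0, exp_le_exp]
    calc log y * ((Λ + 1) / 2) = (1 - η) * (Λ * log y) := by simp only [η]; field_simp; ring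
      _ ≤ (1 - η) * log r := by
        gcongr
        rw [sub_nonneg, div_le_one (by positivity)]; linarith
  calc y ^ ((Λ + 1) / 2) * log r ^ lam
      ≤ exp ((1 - η) * log r) * ((lam / η) ^ lam * exp (η * log r)) := by
        gcongr; exact rpow_nonneg (le_trans (by positivity) hlogr) _
    _ = (2 * Λ * lam / (Λ - 1)) ^ lam * r := by
      rw [hη, mul_left_comm, ← exp_add, sub_mul, one_mul, sub_add_cancel, exp_log hr0]

lemma drift_term_le {lam β ε m x y : ℝ} (hlam : 0 ≤ lam) (hβ : 0 ≤ β) (hε : 0 ≤ ε) (hm : 0 ≤ m)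
    (hx : 0 ≤ x) (hxy : x ≤ y) (hψ : 1 ≤ log y) (hβψ : 2 * β ≤ ε * log y ^ (2 * lam - 1)) :
    (1 + 2 * lam * m * log y ^ (2 * lam - 1)) * (if 1 < x then β * x * log x else 0)
      ≤ y * (2 * β * lam * m + ε / 2) * log y ^ (2 * lam) := by
  have hy : 0 ≤ y := hx.trans hxy
  have hψ0 : 0 < log y := by linarith
  have hsplit : log y ^ (2 * lam) = log y ^ (2 * lam - 1) * log y := by
    rw [← rpow_add_one hψ0.ne']; ring_nf
  split_ifs with hx1
  · have hlog : β * x * log x ≤ β * y * log y := by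
      gcongr
      exact log_nonneg hx1.le
    calc (1 + 2 * lam * m * log y ^ (2 * lam - 1)) * (β * x * log x)
        ≤ (1 + 2 * lam * m * log y ^ (2 * lam - 1)) * (β * y * log y) := by gcongr
      _ = y * (2 * β * lam * m * log y ^ (2 * lam) + 2 * β * log y / 2) := by rw [hsplit]; ring
      _ ≤ y * (2 * β * lam * m * log y ^ (2 * lam) + ε * log y ^ (2 * lam - 1) * log y / 2) := by
          gcongr
      _ = y * (2 * β * lam * m + ε / 2) * log y ^ (2 * lam) := by rw [hsplit]; ring
  · rw [mul_zero]; positivity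

lemma growth_term_le_of_le_rpow {lam γ κ θ Λ Q W y r : ℝ} (hlam : 0 < lam) (hγ : 0 ≤ γ)
    (hθ : 0 < θ) (hΛ : Λ ^ (2 * lam) ≤ θ * κ) (hΛ0 : 0 ≤ Λ) (hQ : 0 < Q)
    (hW : γ ^ 2 * κ / 2 * (1 + 1 / Q) ≤ W) (hy : 1 ≤ y) (hr : 1 ≤ r) (hrΛ : r ≤ y ^ Λ) :
    γ * (1 + Q) * (r * log r ^ lam)
      ≤ θ * Q * (1 + Q) / y * r ^ 2 / 2 + y * W * log y ^ (2 * lam) := by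
  have hy0 : 0 < y := by linarith
  have hψ : 0 ≤ log y := log_nonneg hy
  have hlog : log r ≤ Λ * log y := by
    rw [← log_rpow hy0]; exact log_le_log (by linarith) hrΛ
  set a := θ * Q * (1 + Q) / y
  set v := γ * (1 + Q) * (Λ * log y) ^ lam
  have hv : γ * (1 + Q) * (r * log r ^ lam) ≤ v * r := by
    calc γ * (1 + Q) * (r * log r ^ lam) = γ * (1 + Q) * log r ^ lam * r := by ring
      _ ≤ γ * (1 + Q) * (Λ * log y) ^ lam * r := by gcongr; exact log_nonneg hr
  have hpow : ((Λ * log y) ^ lam) ^ 2 = Λ ^ (2 * lam) * log y ^ (2 * lam) := by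
    rw [← rpow_natCast, ← rpow_mul (by positivity), mul_rpow hΛ0 hψ]
    push_cast; ring_nf
  have hv2 : v ^ 2 / (2 * a) ≤ y * W * log y ^ (2 * lam) := by
    calc v ^ 2 / (2 * a)
        = y * log y ^ (2 * lam) * (γ ^ 2 * (1 + Q) * (Λ ^ (2 * lam) / θ) / (2 * Q)) := by
          simp only [v, a]; rw [mul_pow, hpow]; field_simp
      _ ≤ y * log y ^ (2 * lam) * (γ ^ 2 * (1 + Q) * κ / (2 * Q)) := by
          gcongr; rw [div_le_iff₀ hθ]; linarith
      _ = y * log y ^ (2 * lam) * (γ ^ 2 * κ / 2 * (1 + 1 / Q)) := by field_simp; ring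
      _ ≤ y * W * log y ^ (2 * lam) := by rw [mul_right_comm]; gcongr
  linarith [mul_le_mul_sq_div_two_add_sq_div (v := v) (r := r) (show 0 < a by positivity)]

lemma growth_term_le_of_rpow_le {lam γ θ Λ Q y r : ℝ} (hlam : 0 < lam) (hγ : 0 ≤ γ)
    (hθ : 1 / 2 ≤ θ) (hΛ : 1 < Λ) (hQ : 0 < Q) (hy : 1 ≤ y)
    (hlarge : 4 * γ * (2 * Λ * lam / (Λ - 1)) ^ lam ≤ Q * y ^ ((Λ - 1) / 2)) (hr : y ^ Λ ≤ r) :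
    γ * (1 + Q) * (r * log r ^ lam) ≤ θ * Q * (1 + Q) / y * r ^ 2 / 2 := by
  have hy0 : 0 < y := by linarith
  have hr0 : 0 < r := lt_of_lt_of_le (rpow_pos_of_pos hy0 _) hr
  have hsplit : y ^ ((Λ + 1) / 2) = y ^ ((Λ - 1) / 2) * y := by
    rw [← rpow_add_one hy0.ne']; ring_nf
  have hyΛ : 0 < y ^ ((Λ - 1) / 2) := rpow_pos_of_pos hy0 _
  have hkey : 4 * γ * y * log r ^ lam ≤ Q * r := by
    refine le_of_mul_le_mul_left ?_ hyΛ
    calc y ^ ((Λ - 1) / 2) * (4 * γ * y * log r ^ lam)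
        = 4 * γ * (y ^ ((Λ + 1) / 2) * log r ^ lam) := by rw [hsplit]; ring
      _ ≤ 4 * γ * ((2 * Λ * lam / (Λ - 1)) ^ lam * r) := by
          gcongr 4 * γ * ?_; exact rpow_mul_log_rpow_le hlam hΛ hy hr
      _ ≤ Q * y ^ ((Λ - 1) / 2) * r := by rw [← mul_assoc]; gcongr
      _ = y ^ ((Λ - 1) / 2) * (Q * r) := by ring
  calc γ * (1 + Q) * (r * log r ^ lam)
      = (1 + Q) * r / (4 * y) * (4 * γ * y * log r ^ lam) := by field_simp
    _ ≤ (1 + Q) * r / (4 * y) * (Q * r) := by gcongr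
    _ ≤ θ * Q * (1 + Q) / y * r ^ 2 / 2 := by
        rw [div_mul_eq_mul_div, div_le_iff₀ (by positivity)]
        field_simp
        nlinarith [mul_pos hQ (mul_pos hr0 hr0)]

lemma growth_term_le {lam γ ε κ θ Λ Q W y r : ℝ} (hlam : 0 < lam) (hγ : 0 ≤ γ)
    (hθ : 1 / 2 ≤ θ) (hΛ : Λ ^ (2 * lam) ≤ θ * κ) (hΛ1 : 1 < Λ) (hQ : 0 < Q)
    (hW : γ ^ 2 * κ / 2 * (1 + 1 / Q) ≤ W) (hy : 1 ≤ y)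
    (hsmall : 2 * γ * lam ^ lam * (1 + Q) ≤ ε * y * log y ^ (2 * lam))
    (hlarge : 4 * γ * (2 * Λ * lam / (Λ - 1)) ^ lam ≤ Q * y ^ ((Λ - 1) / 2)) (hr : 0 ≤ r) :
    γ * (1 + Q) * (r * |log r| ^ lam)
      ≤ θ * Q * (1 + Q) / y * r ^ 2 / 2 + y * (W + ε / 2) * log y ^ (2 * lam) := by
  have hθ0 : 0 < θ := by linarith
  have hκ : 0 < κ := pos_of_mul_pos_right ((rpow_pos_of_pos (by linarith) _).trans_le hΛ) hθ0.le
  have hW0 : 0 ≤ W := le_trans (by positivity) hW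
  have hε_term : 0 ≤ y * (ε / 2) * log y ^ (2 * lam) := by
    have : 0 ≤ 2 * γ * lam ^ lam * (1 + Q) := by positivity
    linarith
  have hW_term : 0 ≤ y * W * log y ^ (2 * lam) := by
    have := log_nonneg hy; positivity
  have ha_term : 0 ≤ θ * Q * (1 + Q) / y * r ^ 2 / 2 := by positivity
  rcases le_or_gt r 1 with hr1 | hr1
  · have : γ * (1 + Q) * (r * |log r| ^ lam) ≤ γ * (1 + Q) * lam ^ lam := by
      gcongr; exact mul_abs_log_rpow_le hlam hr hr1
    linarith
  rw [abs_of_nonneg (log_nonneg hr1.le)]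
  rcases le_or_gt r (y ^ Λ) with hrΛ | hrΛ
  · linarith [growth_term_le_of_le_rpow hlam hγ hθ0 hΛ (by linarith) hQ hW hy hr1.le hrΛ]
  · linarith [growth_term_le_of_rpow_le hlam hγ hθ hΛ1 hQ hy hlarge hrΛ.le]

/-- `φ(s, x) = profile k (2λ) (μ s) x`, the proof taking `ν = 0`. -/
noncomputable def profile (k p m x : ℝ) : ℝ := (x + k) * exp (m * log (x + k) ^ p)

noncomputable def profileDeriv (k p m x : ℝ) : ℝ :=
  exp (m * log (x + k) ^ p) * (1 + p * m * log (x + k) ^ (p - 1))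

noncomputable def profileDeriv2 (k p m x : ℝ) : ℝ :=
  exp (m * log (x + k) ^ p) / (x + k) *
    (p * m * log (x + k) ^ (p - 1) * (1 + p * m * log (x + k) ^ (p - 1))
      + p * (p - 1) * m * log (x + k) ^ (p - 2))

section Derivatives

variable {k p m x : ℝ}

lemma hasDerivAt_log_add_rpow (q : ℝ) (hx : 0 < x + k) (hL : log (x + k) ≠ 0) :
    HasDerivAt (fun u => log (u + k) ^ q) (q * log (x + k) ^ (q - 1) / (x + k)) x := by
  convert (((hasDerivAt_id' x).add_const k).log hx.ne').rpow_const (p := q) (Or.inl hL) using 1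
  field_simp

lemma hasDerivAt_profile (hx : 0 < x + k) (hL : log (x + k) ≠ 0) :
    HasDerivAt (profile k p m) (profileDeriv k p m x) x := by
  have h := ((hasDerivAt_log_add_rpow p hx hL).const_mul m).exp
  refine (((hasDerivAt_id' x).add_const k).mul h).congr_deriv ?_
  unfold profileDeriv; field_simp

lemma hasDerivAt_profileDeriv (hx : 0 < x + k) (hL : log (x + k) ≠ 0) :
    HasDerivAt (profileDeriv k p m) (profileDeriv2 k p m x) x := by
  have hE := ((hasDerivAt_log_add_rpow p hx hL).const_mul m).exp
  have hQ := ((hasDerivAt_log_add_rpow (p - 1) hx hL).const_mul (p * m)).const_add 1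
  refine (hE.mul hQ).congr_deriv ?_
  rw [profileDeriv2, show p - 1 - 1 = p - 2 by ring]; field_simp

lemma hasDerivWithinAt_profile_comp {μ : ℝ → ℝ} {μ' s : ℝ} {S : Set ℝ}
    (h : HasDerivWithinAt μ μ' S s) :
    HasDerivWithinAt (fun t => profile k p (μ t) x)
      (profile k p (μ s) x * (μ' * log (x + k) ^ p)) S s := by
  have h' := ((h.mul_const (log (x + k) ^ p)).exp).const_mul (x + k)
  refine h'.congr_deriv ?_
  unfold profile; ring

end Derivatives

section Continuity

variable {X : Type*} [TopologicalSpace X] {U : Set X} {m u : X → ℝ} {k p : ℝ}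

lemma continuousOn_log_add_rpow (hu : ContinuousOn u U) (hu0 : ∀ z ∈ U, 0 ≤ u z) (hk : 1 < k)
    (q : ℝ) : ContinuousOn (fun z => log (u z + k) ^ q) U :=
  ((hu.add continuousOn_const).log fun z hz => show u z + k ≠ 0 by linarith [hu0 z hz]).rpow_const
    fun z hz => Or.inl (log_pos (show 1 < u z + k by linarith [hu0 z hz])).ne'

lemma continuousOn_profile (hm : ContinuousOn m U) (hu : ContinuousOn u U)
    (hu0 : ∀ z ∈ U, 0 ≤ u z) (hk : 1 < k) :
    ContinuousOn (fun z => profile k p (m z) (u z)) U := by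
  have := continuousOn_log_add_rpow hu hu0 hk p
  unfold profile; fun_prop

lemma continuousOn_profileDeriv (hm : ContinuousOn m U) (hu : ContinuousOn u U)
    (hu0 : ∀ z ∈ U, 0 ≤ u z) (hk : 1 < k) :
    ContinuousOn (fun z => profileDeriv k p (m z) (u z)) U := by
  have := continuousOn_log_add_rpow hu hu0 hk p
  have := continuousOn_log_add_rpow hu hu0 hk (p - 1)
  unfold profileDeriv; fun_prop

lemma continuousOn_profileDeriv2 (hm : ContinuousOn m U) (hu : ContinuousOn u U)
    (hu0 : ∀ z ∈ U, 0 ≤ u z) (hk : 1 < k) :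
    ContinuousOn (fun z => profileDeriv2 k p (m z) (u z)) U := by
  have := continuousOn_log_add_rpow hu hu0 hk p
  have := continuousOn_log_add_rpow hu hu0 hk (p - 1)
  have := continuousOn_log_add_rpow hu hu0 hk (p - 2)
  have hy : ∀ z ∈ U, u z + k ≠ 0 := fun z hz => by linarith [hu0 z hz]
  unfold profileDeriv2; fun_prop (disch := assumption)

end Continuity

theorem profile_regularity {μ μ' : ℝ → ℝ} {S : Set ℝ} {k p : ℝ} (hk : 1 < k)
    (hμ : ∀ s ∈ S, HasDerivWithinAt μ (μ' s) S s) (hμ' : ContinuousOn μ' S) :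
    (∀ s ∈ S, ∀ x ∈ Ici (0 : ℝ),
      HasDerivWithinAt (fun t => profile k p (μ t) x)
        (profile k p (μ s) x * (μ' s * log (x + k) ^ p)) S s ∧
      HasDerivWithinAt (profile k p (μ s)) (profileDeriv k p (μ s) x) (Ici 0) x ∧
      HasDerivWithinAt (profileDeriv k p (μ s)) (profileDeriv2 k p (μ s) x) (Ici 0) x) ∧
    ContinuousOn (fun z : ℝ × ℝ => profile k p (μ z.1) z.2) (S ×ˢ Ici 0) ∧
    ContinuousOn (fun z : ℝ × ℝ => profile k p (μ z.1) z.2 * (μ' z.1 * log (z.2 + k) ^ p))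
      (S ×ˢ Ici 0) ∧
    ContinuousOn (fun z : ℝ × ℝ => profileDeriv k p (μ z.1) z.2) (S ×ˢ Ici 0) ∧
    ContinuousOn (fun z : ℝ × ℝ => profileDeriv2 k p (μ z.1) z.2) (S ×ˢ Ici 0) := by
  have hfst : MapsTo Prod.fst (S ×ˢ Ici (0 : ℝ)) S := fun z hz => hz.1
  have hμc : ContinuousOn μ S := fun s hs => (hμ s hs).continuousWithinAt
  have hm : ContinuousOn (fun z : ℝ × ℝ => μ z.1) (S ×ˢ Ici 0) := hμc.comp continuousOn_fst hfst
  have hu0 : ∀ z ∈ S ×ˢ Ici (0 : ℝ), 0 ≤ z.2 := fun z hz => hz.2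
  refine ⟨fun s hs x (hx : 0 ≤ x) => ?_, continuousOn_profile hm continuousOn_snd hu0 hk,
    (continuousOn_profile hm continuousOn_snd hu0 hk).mul ((hμ'.comp continuousOn_fst hfst).mul
      (continuousOn_log_add_rpow continuousOn_snd hu0 hk p)),
    continuousOn_profileDeriv hm continuousOn_snd hu0 hk,
    continuousOn_profileDeriv2 hm continuousOn_snd hu0 hk⟩
  have hxk : 0 < x + k := by linarith
  have hL : log (x + k) ≠ 0 := (log_pos (by linarith)).ne'
  exact ⟨hasDerivWithinAt_profile_comp (hμ s hs), (hasDerivAt_profile hxk hL).hasDerivWithinAt,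
    (hasDerivAt_profileDeriv hxk hL).hasDerivWithinAt⟩

/-- Lower bounds on the shift `k`, one per estimate: `two_mul_le_mul_log_rpow` pays for the drift,
`small_le` for `|z| ≤ 1`, `large_le` for `|z| ≥ (x + k) ^ Λ`, and `one_le_mul_log_rpow` makes
`exp (μ ψ^{2λ}) ≥ x + k`. -/
structure IsAdmissibleShift (lam β γ ε Λ m₀ M k : ℝ) : Prop where
  exp_one_le : exp 1 ≤ k
  one_le_mul_log_rpow : 1 ≤ m₀ * log k ^ (2 * lam - 1)
  two_mul_le_mul_log_rpow : 2 * β ≤ ε * log k ^ (2 * lam - 1)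
  small_le : 2 * γ * lam ^ lam * (1 + 2 * lam * M) ≤ ε * k
  large_le : 4 * γ * (2 * Λ * lam / (Λ - 1)) ^ lam ≤ 2 * lam * m₀ * k ^ ((Λ - 1) / 2)

namespace IsAdmissibleShift

variable {lam β γ ε Λ m₀ M k : ℝ}

lemma one_lt (h : IsAdmissibleShift lam β γ ε Λ m₀ M k) : 1 < k :=
  (one_lt_exp_iff.mpr one_pos).trans_le h.exp_one_le

lemma one_le_log (h : IsAdmissibleShift lam β γ ε Λ m₀ M k) : 1 ≤ log k :=
  (le_log_iff_exp_le (by linarith [h.one_lt])).mpr h.exp_one_le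

lemma mono {k' : ℝ} (h : IsAdmissibleShift lam β γ ε Λ m₀ M k) (hkk' : k ≤ k')
    (hlam : 1 / 2 ≤ lam) (hε : 0 ≤ ε) (hΛ : 1 ≤ Λ) (hm₀ : 0 ≤ m₀) :
    IsAdmissibleShift lam β γ ε Λ m₀ M k' := by
  have hk := h.one_lt
  have hlog : log k ^ (2 * lam - 1) ≤ log k' ^ (2 * lam - 1) :=
    rpow_le_rpow (by linarith [h.one_le_log]) (log_le_log (by linarith) hkk') (by linarith)
  have hpow : k ^ ((Λ - 1) / 2) ≤ k' ^ ((Λ - 1) / 2) :=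
    rpow_le_rpow (by linarith) hkk' (by linarith)
  exact ⟨h.exp_one_le.trans hkk', h.one_le_mul_log_rpow.trans (by gcongr),
    h.two_mul_le_mul_log_rpow.trans (by gcongr), h.small_le.trans (by gcongr),
    h.large_le.trans (by gcongr)⟩

end IsAdmissibleShift

lemma eventually_isAdmissibleShift {lam β γ ε Λ m₀ M : ℝ} (hlam : 1 / 2 < lam) (hε : 0 < ε)
    (hΛ : 1 < Λ) (hm₀ : 0 < m₀) : ∀ᶠ k in atTop, IsAdmissibleShift lam β γ ε Λ m₀ M k := by
  have hlog : Tendsto (fun k => log k ^ (2 * lam - 1)) atTop atTop :=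
    (tendsto_rpow_atTop (by linarith)).comp tendsto_log_atTop
  filter_upwards [eventually_ge_atTop (exp 1),
    (hlog.const_mul_atTop hm₀).eventually_ge_atTop 1,
    (hlog.const_mul_atTop hε).eventually_ge_atTop (2 * β),
    (tendsto_id.const_mul_atTop hε).eventually_ge_atTop _,
    ((tendsto_rpow_atTop (y := (Λ - 1) / 2) (by linarith)).const_mul_atTop
      (r := 2 * lam * m₀) (by positivity)).eventually_ge_atTop _]
    with k h₁ h₂ h₃ h₄ h₅
  exact ⟨h₁, h₂, h₃, h₄, h₅⟩

lemma one_le_exp_mul_log_rpow_div {lam m₀ m y : ℝ} (hy : 0 < y) (hψ : 1 ≤ log y)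
    (hm₀ : 1 ≤ m₀ * log y ^ (2 * lam - 1)) (hm : m₀ ≤ m) :
    1 ≤ exp (m * log y ^ (2 * lam)) / y := by
  rw [one_le_div hy, ← exp_log hy, exp_le_exp, log_exp]
  calc log y ≤ m₀ * log y ^ (2 * lam - 1) * log y := le_mul_of_one_le_left (by linarith) hm₀
    _ ≤ m * log y ^ (2 * lam - 1) * log y := by gcongr
    _ = m * log y ^ (2 * lam) := by rw [mul_assoc, ← rpow_add_one (by positivity)]; ring_nf

lemma mul_le_mul_add_sub {θ e Q R c δ : ℝ} (he : 1 ≤ e) (hc : 0 ≤ c) (hcQ : c ≤ Q) (hR : 0 ≤ R)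
    (hθ : θ ≤ 1) (hδ : δ ≤ (1 - θ) * c) :
    θ * (e * (Q * (1 + Q))) ≤ e * (Q * (1 + Q) + R) - δ := by
  have : c ≤ e * (Q * (1 + Q)) :=
    calc c ≤ 1 * (Q * 1) := by linarith
      _ ≤ e * (Q * (1 + Q)) := by gcongr <;> linarith
  nlinarith

lemma two_mul_rpow_mul_one_add_le {lam γ ε m M y : ℝ} (hlam : 1 / 2 ≤ lam) (hγ : 0 ≤ γ)
    (hm : 0 ≤ m) (hmM : m ≤ M) (hψ : 1 ≤ log y)
    (h : 2 * γ * lam ^ lam * (1 + 2 * lam * M) ≤ ε * y) :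
    2 * γ * lam ^ lam * (1 + 2 * lam * m * log y ^ (2 * lam - 1)) ≤ ε * y * log y ^ (2 * lam) := by
  have hM : 0 ≤ M := hm.trans hmM
  have hpow : 1 ≤ log y ^ (2 * lam) := one_le_rpow hψ (by linarith)
  have hpow' : log y ^ (2 * lam - 1) ≤ log y ^ (2 * lam) :=
    rpow_le_rpow_of_exponent_le hψ (by linarith)
  have : 2 * lam * m * log y ^ (2 * lam - 1) ≤ 2 * lam * M * log y ^ (2 * lam) := by gcongr
  calc 2 * γ * lam ^ lam * (1 + 2 * lam * m * log y ^ (2 * lam - 1))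
      ≤ 2 * γ * lam ^ lam * ((1 + 2 * lam * M) * log y ^ (2 * lam)) := by gcongr; linarith
    _ ≤ ε * y * log y ^ (2 * lam) := by
        rw [← mul_assoc]; exact mul_le_mul_of_nonneg_right h (by positivity)

theorem profile_supersolution {F : Type*} [NormedAddCommGroup F] [DecidableEq F]
    {lam β γ ε κ θ Λ m₀ M m k x δ W : ℝ}
    (hlam : 1 / 2 < lam) (hβ : 0 ≤ β) (hγ : 0 ≤ γ) (hε : 0 ≤ ε) (hθ : 1 / 2 ≤ θ) (hθ1 : θ ≤ 1)
    (hΛ : Λ ^ (2 * lam) ≤ θ * κ) (hΛ1 : 1 < Λ) (hm₀ : 0 < m₀) (hm : m₀ ≤ m) (hmM : m ≤ M)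
    (hk : IsAdmissibleShift lam β γ ε Λ m₀ M k) (hδ : δ ≤ (1 - θ) * (2 * lam * m₀))
    (hW : γ ^ 2 * κ / 2 * (1 + 1 / (2 * lam * m)) ≤ W) (hx : 0 ≤ x) (z : F) :
    0 ≤ -profileDeriv k (2 * lam) m x * ((if 1 < x then β * x * log x else 0)
          + γ * (if z = 0 then 0 else ‖z‖ * |log ‖z‖| ^ lam))
        + 1 / 2 * (profileDeriv2 k (2 * lam) m x - δ) * ‖z‖ ^ 2
        + profile k (2 * lam) m x * ((W + 2 * β * lam * m + ε) * log (x + k) ^ (2 * lam)) := by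
  have hy := hk.mono (le_add_of_nonneg_left hx) hlam.le hε hΛ1.le hm₀.le
  have hg : (if z = 0 then 0 else ‖z‖ * |log ‖z‖| ^ lam) = ‖z‖ * |log ‖z‖| ^ lam := by
    split_ifs with hz <;> simp [hz]
  have hxy : x ≤ x + k := by linarith [hk.one_lt]
  have hκ : 0 ≤ κ :=
    (pos_of_mul_pos_right ((rpow_pos_of_pos (by linarith) _).trans_le hΛ) (by linarith)).le
  unfold profile profileDeriv profileDeriv2
  rw [hg]
  set y := x + k
  set ψ := log y
  set Q := 2 * lam * m * ψ ^ (2 * lam - 1)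
  set E := exp (m * ψ ^ (2 * lam))
  have hy0 : 0 < y := by linarith [hy.one_lt]
  have hψ1 : 1 ≤ ψ := hy.one_le_log
  have hm0 : 0 < m := hm₀.trans_le hm
  have hQm : 2 * lam * m ≤ Q :=
    le_mul_of_one_le_right (by positivity) (one_le_rpow hψ1 (by linarith))
  have hQ : 2 * lam * m₀ ≤ Q := le_trans (by gcongr) hQm
  have hQ0 : 0 < Q := by positivity
  have hdiff := mul_le_mul_add_sub (θ := θ) (R := 2 * lam * (2 * lam - 1) * m * ψ ^ (2 * lam - 2))
    (one_le_exp_mul_log_rpow_div hy0 hψ1 hy.one_le_mul_log_rpow hm) (by positivity) hQ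
    (by have : 0 ≤ 2 * lam - 1 := (by linarith); positivity) hθ1 hδ
  have hdrift := drift_term_le (lam := lam) (m := m) (by linarith) hβ hε hm0.le hx
    hxy hψ1 hy.two_mul_le_mul_log_rpow
  have hgrowth := growth_term_le (ε := ε) (r := ‖z‖) (by linarith) hγ hθ hΛ hΛ1 hQ0
    (le_trans (by gcongr) hW) hy.one_lt.le
    (two_mul_rpow_mul_one_add_le hlam.le hγ hm0.le hmM hψ1 hy.small_le)
    (hy.large_le.trans (by gcongr)) (norm_nonneg z)
  have hE0 : 0 ≤ E := (exp_pos _).le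
  linear_combination E * hdrift + E * hgrowth + ‖z‖ ^ 2 / 2 * hdiff

lemma IsCompact.exists_pos_bounds {α : Type*} [TopologicalSpace α] {s : Set α} {f : α → ℝ}
    (hs : IsCompact s) (hne : s.Nonempty) (hf : ContinuousOn f s) (hpos : ∀ x ∈ s, 0 < f x) :
    ∃ m M, 0 < m ∧ ∀ x ∈ s, m ≤ f x ∧ f x ≤ M := by
  obtain ⟨x₀, hx₀, hmin⟩ := hs.exists_isMinOn hne hf
  obtain ⟨x₁, -, hmax⟩ := hs.exists_isMaxOn hne hf
  exact ⟨f x₀, f x₁, hpos x₀ hx₀, fun x hx => ⟨hmin hx, hmax hx⟩⟩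

lemma exists_one_lt_rpow_eq_mul {lam κ : ℝ} (hlam : 0 < lam) (hκ : 1 < κ) :
    ∃ θ Λ, 1 / 2 ≤ θ ∧ θ < 1 ∧ 1 < Λ ∧ Λ ^ (2 * lam) = θ * κ := by
  refine ⟨(κ + 1) / (2 * κ), ((κ + 1) / 2) ^ (1 / (2 * lam)), ?_, ?_,
    one_lt_rpow (by linarith) (by positivity), ?_⟩
  · rw [le_div_iff₀ (by positivity)]; linarith
  · rw [div_lt_one (by positivity)]; linarith
  · rw [← rpow_mul (by positivity), one_div_mul_cancel (by positivity), rpow_one]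
    field_simp

open Classical in
theorem stmt_14_general (lam β γ ε T : ℝ) (d : ℕ)
    (hlam : 1 / 2 < lam) (hβ : 0 ≤ β) (hγ : 0 < γ) (hε : 0 < ε) (hT : 0 < T)
    (klam : ℝ) (hklam : klam = (2 : ℝ) ^ (2 * max (lam - 1) 0 + 2 * lam - 1))
    (μ : ℝ → ℝ) (hμpos : ∀ s ∈ Set.Icc 0 T, 0 < μ s)
    (hμderiv : ∀ s ∈ Set.Icc 0 T,
      HasDerivWithinAt μ
        (γ ^ 2 * (1 + ε) * klam / 2 * (1 + 1 / (2 * lam * μ s)) + 2 * β * lam * μ s + ε)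
        (Set.Icc 0 T) s) :
    ∃ k δ : ℝ, Real.exp 1 ≤ k ∧ 0 < δ ∧
    ∃ ν ν' : ℝ → ℝ, ν 0 = 0 ∧ (∀ s ∈ Set.Icc 0 T, 0 ≤ ν s) ∧
      MonotoneOn ν (Set.Icc 0 T) ∧ ContinuousOn ν' (Set.Icc 0 T) ∧
      (∀ s ∈ Set.Icc 0 T, HasDerivWithinAt ν (ν' s) (Set.Icc 0 T) s) ∧
    ∃ φ φs φx φxx : ℝ → ℝ → ℝ,
      (∀ s x, φ s x =
        (x + k) * Real.exp (μ s * Real.log (x + k) ^ (2 * lam) + ν s)) ∧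
      (∀ s ∈ Set.Icc 0 T, ∀ x ∈ Set.Ici (0 : ℝ),
        HasDerivWithinAt (fun t => φ t x) (φs s x) (Set.Icc 0 T) s ∧
        HasDerivWithinAt (fun u => φ s u) (φx s x) (Set.Ici 0) x ∧
        HasDerivWithinAt (fun u => φx s u) (φxx s x) (Set.Ici 0) x) ∧
      ContinuousOn (fun p : ℝ × ℝ => φ p.1 p.2) (Set.Icc 0 T ×ˢ Set.Ici 0) ∧
      ContinuousOn (fun p : ℝ × ℝ => φs p.1 p.2) (Set.Icc 0 T ×ˢ Set.Ici 0) ∧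
      ContinuousOn (fun p : ℝ × ℝ => φx p.1 p.2) (Set.Icc 0 T ×ˢ Set.Ici 0) ∧
      ContinuousOn (fun p : ℝ × ℝ => φxx p.1 p.2) (Set.Icc 0 T ×ˢ Set.Ici 0) ∧
      ∀ s ∈ Set.Icc 0 T, ∀ x ∈ Set.Ici (0 : ℝ), ∀ z : EuclideanSpace ℝ (Fin d),
        0 ≤ -φx s x * ((if 1 < x then β * x * Real.log x else 0)
              + γ * (if z = 0 then 0 else ‖z‖ * |Real.log ‖z‖| ^ lam))
            + 1 / 2 * (φxx s x - δ) * ‖z‖ ^ 2 + φs s x := by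
  have hμc : ContinuousOn μ (Icc 0 T) := fun s hs => (hμderiv s hs).continuousWithinAt
  obtain ⟨m₀, M, hm₀, hμ_bounds⟩ :=
    isCompact_Icc.exists_pos_bounds (nonempty_Icc.mpr hT.le) hμc hμpos
  have hκ : 1 < (1 + ε) * klam := by
    have : 1 < klam := hklam ▸ one_lt_rpow (by norm_num) (by linarith [le_max_right (lam - 1) 0])
    nlinarith
  obtain ⟨θ, Λ, hθ, hθ1, hΛ1, hΛ⟩ := exists_one_lt_rpow_eq_mul (lam := lam) (by linarith) hκ
  obtain ⟨k, hk⟩ := (eventually_isAdmissibleShift (β := β) (γ := γ) (M := M) hlam hε hΛ1 hm₀).exists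
  set μ' : ℝ → ℝ := fun s =>
    γ ^ 2 * (1 + ε) * klam / 2 * (1 + 1 / (2 * lam * μ s)) + 2 * β * lam * μ s + ε
  have hμ'c : ContinuousOn μ' (Icc 0 T) := by
    have : ∀ s ∈ Icc 0 T, 2 * lam * μ s ≠ 0 := fun s hs => by have := hμpos s hs; positivity
    fun_prop (disch := first | assumption | norm_num)
  obtain ⟨hderiv, hφ, hφs, hφx, hφxx⟩ := profile_regularity (p := 2 * lam) hk.one_lt hμderiv hμ'c
  refine ⟨k, (1 - θ) * (2 * lam * m₀), hk.exp_one_le, by have := sub_pos.mpr hθ1; positivity,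
    fun _ => 0, fun _ => 0, rfl, fun _ _ => le_rfl, monotoneOn_const, continuousOn_const,
    fun s _ => hasDerivWithinAt_const s _ 0, fun s x => profile k (2 * lam) (μ s) x,
    fun s x => profile k (2 * lam) (μ s) x * (μ' s * log (x + k) ^ (2 * lam)),
    fun s x => profileDeriv k (2 * lam) (μ s) x, fun s x => profileDeriv2 k (2 * lam) (μ s) x,
    fun s x => by simp [profile], hderiv, hφ, hφs, hφx, hφxx, fun s hs x hx z => ?_⟩
  exact profile_supersolution (W := γ ^ 2 * (1 + ε) * klam / 2 * (1 + 1 / (2 * lam * μ s)))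
    hlam hβ hγ.le hε.le hθ hθ1.le hΛ.le hΛ1 hm₀ (hμ_bounds s hs).1 (hμ_bounds s hs).2 hk le_rfl
    (le_of_eq (by ring)) hx z

open Classical in
/-- Proposition 6.1 (case `λ > 1/2`): with `k_λ = 2^{2(λ-1)⁺ + 2λ - 1}` and `μ` the
solution of the IVP `μ(0) = ε`, `μ′ = (γ²(1+ε)k_λ/2)·(1 + 1/(2λμ)) + 2βλμ + ε` on
`[0,T]`, there exist constants `k ≥ e`, `δ > 0` and a nondecreasing `C¹` function
`ν ≥ 0` with `ν(0) = 0`, such that `φ(s,x) := (x+k)·exp(μ(s)·(ln(x+k))^{2λ} + ν(s))`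
is `C^{1,2}` on `[0,T]×[0,∞)` and satisfies
`−∂ₓφ·(β·x·ln x·𝟙_{x>1} + γ·|z|·|ln|z||^λ) + (1/2)·(∂ₓₓφ − δ)·|z|² + ∂ₛφ ≥ 0`
(the map `z ↦ |z|·|ln|z||^λ` being extended by `0` at `z = 0`). -/
theorem stmt_14 (lam β γ ε T : ℝ) (d : ℕ) (hd : 1 ≤ d)
    (hlam : 1 / 2 < lam) (hβ : 0 ≤ β) (hγ : 0 < γ) (hε : 0 < ε) (hT : 0 < T)
    (klam : ℝ) (hklam : klam = (2 : ℝ) ^ (2 * max (lam - 1) 0 + 2 * lam - 1))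
    (μ : ℝ → ℝ) (hμ0 : μ 0 = ε) (hμpos : ∀ s ∈ Set.Icc 0 T, 0 < μ s)
    (hμderiv : ∀ s ∈ Set.Icc 0 T,
      HasDerivWithinAt μ
        (γ ^ 2 * (1 + ε) * klam / 2 * (1 + 1 / (2 * lam * μ s)) + 2 * β * lam * μ s + ε)
        (Set.Icc 0 T) s) :
    ∃ k δ : ℝ, Real.exp 1 ≤ k ∧ 0 < δ ∧
    ∃ ν ν' : ℝ → ℝ, ν 0 = 0 ∧ (∀ s ∈ Set.Icc 0 T, 0 ≤ ν s) ∧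
      MonotoneOn ν (Set.Icc 0 T) ∧ ContinuousOn ν' (Set.Icc 0 T) ∧
      (∀ s ∈ Set.Icc 0 T, HasDerivWithinAt ν (ν' s) (Set.Icc 0 T) s) ∧
    ∃ φ φs φx φxx : ℝ → ℝ → ℝ,
      (∀ s x, φ s x =
        (x + k) * Real.exp (μ s * Real.log (x + k) ^ (2 * lam) + ν s)) ∧
      (∀ s ∈ Set.Icc 0 T, ∀ x ∈ Set.Ici (0 : ℝ),
        HasDerivWithinAt (fun t => φ t x) (φs s x) (Set.Icc 0 T) s ∧
        HasDerivWithinAt (fun u => φ s u) (φx s x) (Set.Ici 0) x ∧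
        HasDerivWithinAt (fun u => φx s u) (φxx s x) (Set.Ici 0) x) ∧
      ContinuousOn (fun p : ℝ × ℝ => φ p.1 p.2) (Set.Icc 0 T ×ˢ Set.Ici 0) ∧
      ContinuousOn (fun p : ℝ × ℝ => φs p.1 p.2) (Set.Icc 0 T ×ˢ Set.Ici 0) ∧
      ContinuousOn (fun p : ℝ × ℝ => φx p.1 p.2) (Set.Icc 0 T ×ˢ Set.Ici 0) ∧
      ContinuousOn (fun p : ℝ × ℝ => φxx p.1 p.2) (Set.Icc 0 T ×ˢ Set.Ici 0) ∧
      ∀ s ∈ Set.Icc 0 T, ∀ x ∈ Set.Ici (0 : ℝ), ∀ z : EuclideanSpace ℝ (Fin d),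
        0 ≤ -φx s x * ((if 1 < x then β * x * Real.log x else 0)
              + γ * (if z = 0 then 0 else ‖z‖ * |Real.log ‖z‖| ^ lam))
            + 1 / 2 * (φxx s x - δ) * ‖z‖ ^ 2 + φs s x :=
  stmt_14_general lam β γ ε T d hlam hβ hγ hε hT klam hklam μ hμpos hμderiv
end
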